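/- arXiv:2406.17196 — 10 statements merged into one kernel-verified Lean document; each statement's English description precedes it below -/
import Mathlib

section
/- Let A ∈ ℝ^{k×k} be invertible, Q ∈ ℝ^{k×k} positive definite, H ∈ ℝ^{n×n}, and p ≥ 0. The following are equivalent: (i) there exist a positive definite P ∈ ℝ^{k×k}, a matrix Γ ∈ ℝ^{n×k}, and a positive definite Π ∈ ℝ^{n×n} with Tr(Π) ≤ p such that P = APAᵀ + Q − AΓᵀHᵀ(I + HΠHᵀ)⁻¹HΓAᵀ and ΓP⁻¹Γᵀ ⪯ Π; (ii) there exist a positive semidefinite J ∈ ℝ^{k×k}, a matrix Γ ∈ ℝ^{n×k}, and a positive definite Π ∈ ℝ^{n×n} with Tr(Π) ≤ p such that J + ΓᵀΠ⁻¹Γ is positive definite and AJAᵀ − J + AΓᵀΠ⁻¹ΓAᵀ + Q − AΓᵀHᵀ(I + HΠHᵀ)⁻¹HΓAᵀ − ΓᵀΠ⁻¹Γ = 0. Moreover, the two are related by P = J + ΓᵀΠ⁻¹Γ. -/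
open Matrix

lemma schur_swap {k n : ℕ} {P : Matrix (Fin k) (Fin k) ℝ} {Γ : Matrix (Fin n) (Fin k) ℝ}
    {V : Matrix (Fin n) (Fin n) ℝ} (hP : P.PosDef) (hV : V.PosDef) :
    (V - Γ * P⁻¹ * Γᵀ).PosSemidef ↔ (P - Γᵀ * V⁻¹ * Γ).PosSemidef := by
  have hPi : Invertible P := hP.isUnit.invertible
  have hVi : Invertible V := hV.isUnit.invertible
  have h1 := Matrix.PosDef.fromBlocks₁₁ (Γᵀ : Matrix (Fin k) (Fin n) ℝ) V hP
  have h2 := Matrix.PosDef.fromBlocks₂₂ P (Γᵀ : Matrix (Fin k) (Fin n) ℝ) hV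
  have hc : (Γᵀ)ᴴ = Γ := by
    ext i j; simp [Matrix.conjTranspose_apply]
  rw [hc] at h1 h2
  rw [← h1, h2]

/-- Equivalence between the power-feasible DARE formulation (with `P ≻ 0`,
`Γ P⁻¹ Γᵀ ⪯ V`, `Tr V ≤ p`) and the Lyapunov formulation in `J ⪰ 0`,
with the two related by `P = J + Γᵀ V⁻¹ Γ`.  (Here `V` plays the role of `Π`.) -/
theorem stmt1 {k n : ℕ} (A Q : Matrix (Fin k) (Fin k) ℝ) (hA : IsUnit A) (hQ : Q.PosDef)
    (H : Matrix (Fin n) (Fin n) ℝ) (p : ℝ) (hp : 0 ≤ p) :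
    (∀ (P : Matrix (Fin k) (Fin k) ℝ) (Γ : Matrix (Fin n) (Fin k) ℝ)
        (V : Matrix (Fin n) (Fin n) ℝ),
        P.PosDef → V.PosDef → V.trace ≤ p →
        P = A * P * Aᵀ + Q - A * Γᵀ * Hᵀ * (1 + H * V * Hᵀ)⁻¹ * H * Γ * Aᵀ →
        (V - Γ * P⁻¹ * Γᵀ).PosSemidef →
        ∃ J : Matrix (Fin k) (Fin k) ℝ, J.PosSemidef ∧ (J + Γᵀ * V⁻¹ * Γ).PosDef ∧
          A * J * Aᵀ - J + A * Γᵀ * V⁻¹ * Γ * Aᵀ + Q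
            - A * Γᵀ * Hᵀ * (1 + H * V * Hᵀ)⁻¹ * H * Γ * Aᵀ - Γᵀ * V⁻¹ * Γ = 0 ∧
          P = J + Γᵀ * V⁻¹ * Γ) ∧
    (∀ (J : Matrix (Fin k) (Fin k) ℝ) (Γ : Matrix (Fin n) (Fin k) ℝ)
        (V : Matrix (Fin n) (Fin n) ℝ),
        J.PosSemidef → V.PosDef → V.trace ≤ p →
        (J + Γᵀ * V⁻¹ * Γ).PosDef →
        A * J * Aᵀ - J + A * Γᵀ * V⁻¹ * Γ * Aᵀ + Q
          - A * Γᵀ * Hᵀ * (1 + H * V * Hᵀ)⁻¹ * H * Γ * Aᵀ - Γᵀ * V⁻¹ * Γ = 0 →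
        ∃ P : Matrix (Fin k) (Fin k) ℝ, P.PosDef ∧
          P = A * P * Aᵀ + Q - A * Γᵀ * Hᵀ * (1 + H * V * Hᵀ)⁻¹ * H * Γ * Aᵀ ∧
          (V - Γ * P⁻¹ * Γᵀ).PosSemidef ∧ P = J + Γᵀ * V⁻¹ * Γ) := by
  constructor
  · intro P Γ V hP hV htr heq hSchur
    refine ⟨P - Γᵀ * V⁻¹ * Γ, (schur_swap hP hV).mp hSchur, ?_, ?_, by abel⟩
    · have : P - Γᵀ * V⁻¹ * Γ + Γᵀ * V⁻¹ * Γ = P := by abel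
      rw [this]; exact hP
    · have key : A * (P - Γᵀ * V⁻¹ * Γ) * Aᵀ - (P - Γᵀ * V⁻¹ * Γ)
          + A * Γᵀ * V⁻¹ * Γ * Aᵀ + Q
          - A * Γᵀ * Hᵀ * (1 + H * V * Hᵀ)⁻¹ * H * Γ * Aᵀ - Γᵀ * V⁻¹ * Γ
          = (A * P * Aᵀ + Q - A * Γᵀ * Hᵀ * (1 + H * V * Hᵀ)⁻¹ * H * Γ * Aᵀ) - P := by
        simp only [mul_sub, sub_mul, mul_add, add_mul, mul_assoc, Matrix.mul_assoc]; abel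
      rw [key, ← heq, sub_self]
  · intro J Γ V hJ hV htr hPD heq
    refine ⟨J + Γᵀ * V⁻¹ * Γ, hPD, ?_, ?_, rfl⟩
    · have key : A * (J + Γᵀ * V⁻¹ * Γ) * Aᵀ + Q
          - A * Γᵀ * Hᵀ * (1 + H * V * Hᵀ)⁻¹ * H * Γ * Aᵀ
          = (A * J * Aᵀ - J + A * Γᵀ * V⁻¹ * Γ * Aᵀ + Q
            - A * Γᵀ * Hᵀ * (1 + H * V * Hᵀ)⁻¹ * H * Γ * Aᵀ - Γᵀ * V⁻¹ * Γ)
            + (J + Γᵀ * V⁻¹ * Γ) := by simp only [mul_sub, sub_mul, mul_add, add_mul, mul_assoc, Matrix.mul_assoc]; abel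
      rw [key, heq, zero_add]
    · refine (schur_swap hPD hV).mpr ?_
      have : J + Γᵀ * V⁻¹ * Γ - Γᵀ * V⁻¹ * Γ = J := by abel
      rw [this]; exact hJ
end

section
/- Let H = diag(h₁, …, hₙ) with h₁ ≥ h₂ ≥ … ≥ hₙ > 0, let Π ∈ ℝ^{n×n} be positive semidefinite, and let λ₁ ≥ λ₂ ≥ … ≥ λₙ ≥ 0 be the eigenvalues of Π^{1/2}HᵀHΠ^{1/2} listed in decreasing order. Then ∑_{i=1}^{n} λᵢ / hᵢ² ≤ Tr(Π). Consequently, the diagonal matrix Π̃ = diag(λ₁/h₁², …, λₙ/hₙ²) is positive semidefinite, satisfies Tr(Π̃) ≤ Tr(Π), and Π̃^{1/2}HᵀHΠ̃^{1/2} = diag(λ₁, …, λₙ). -/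
open Matrix Finset

/-- The positive semidefinite square root, as defined in Mathlib of December 2024. -/
noncomputable def Matrix.PosSemidef.sqrt {n : Type*} [Fintype n] [DecidableEq n]
    {A : Matrix n n ℝ} (hA : A.PosSemidef) : Matrix n n ℝ :=
  hA.1.eigenvectorUnitary.1 * diagonal ((√·) ∘ hA.1.eigenvalues) *
    (star hA.1.eigenvectorUnitary : Matrix n n ℝ)

section
open scoped MatrixOrder

private lemma psd_sqrt_eq_cfc {m : Type*} [Fintype m] [DecidableEq m]
    {A : Matrix m m ℝ} (hA : A.PosSemidef) : hA.sqrt = CFC.sqrt A := by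
  rw [CFC.sqrt_eq_real_sqrt A hA.nonneg, cfcₙ_eq_cfc, hA.1.cfc_eq]
  rfl

lemma Matrix.PosSemidef.posSemidef_sqrt {m : Type*} [Fintype m] [DecidableEq m]
    {A : Matrix m m ℝ} (hA : A.PosSemidef) : hA.sqrt.PosSemidef := by
  rw [psd_sqrt_eq_cfc]
  exact (CFC.sqrt_nonneg A).posSemidef

lemma Matrix.PosSemidef.sqrt_mul_self {m : Type*} [Fintype m] [DecidableEq m]
    {A : Matrix m m ℝ} (hA : A.PosSemidef) : hA.sqrt * hA.sqrt = A := by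
  rw [psd_sqrt_eq_cfc]
  exact CFC.sqrt_mul_sqrt_self A hA.nonneg

lemma Matrix.PosSemidef.eq_sqrt_of_sq_eq {m : Type*} [Fintype m] [DecidableEq m]
    {A : Matrix m m ℝ} (hA : A.PosSemidef) {B : Matrix m m ℝ} (hB : B.PosSemidef)
    (h : A ^ 2 = B) : A = hB.sqrt := by
  rw [psd_sqrt_eq_cfc, ← h]
  exact (CFC.sqrt_sq A hA.nonneg).symm

end

private lemma stmt2_L1 {n : ℕ} (k : Fin n) (a r : Fin n → ℝ) (amono : Monotone a)
    (hr0 : ∀ i, 0 ≤ r i) (hr1 : ∀ i, r i ≤ 1)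
    (hsum : ∑ i, r i = ∑ i, (if i ≤ k then (1:ℝ) else 0)) :
    ∑ i, (if i ≤ k then a i else 0) ≤ ∑ i, a i * r i := by
  have key : 0 ≤ ∑ i, (a i - a k) * (r i - if i ≤ k then 1 else 0) := by
    apply Finset.sum_nonneg
    intro i _
    by_cases hik : i ≤ k
    · simp only [if_pos hik]
      have h1 : a i - a k ≤ 0 := sub_nonpos.mpr (amono hik)
      have h2 : r i - 1 ≤ 0 := sub_nonpos.mpr (hr1 i)
      nlinarith
    · simp only [if_neg hik]
      have h1 : 0 ≤ a i - a k := sub_nonneg.mpr (amono (le_of_not_ge hik))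
      have h2 : 0 ≤ r i - 0 := by simpa using hr0 i
      exact mul_nonneg h1 h2
  have e1 : ∑ i, (a i - a k) * (r i - if i ≤ k then 1 else 0)
      = (∑ i, a i * r i) - (∑ i, if i ≤ k then a i else 0)
        - a k * (∑ i, r i) + a k * (∑ i, if i ≤ k then (1:ℝ) else 0) := by
    rw [Finset.mul_sum, Finset.mul_sum, ← Finset.sum_sub_distrib, ← Finset.sum_sub_distrib,
      ← Finset.sum_add_distrib]
    apply Finset.sum_congr rfl
    intro i _
    by_cases hik : i ≤ k <;> simp [hik] <;> ring
  rw [e1, hsum] at key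
  linarith

private lemma stmt2_sumIic {n : ℕ} (f : Fin n → ℝ) (m : ℕ) (hm : m < n) :
    ∑ j ∈ range (m+1), (if hj : j < n then f ⟨j, hj⟩ else 0)
      = ∑ j ∈ Iic (⟨m, hm⟩ : Fin n), f j := by
  have h1 : (Iic (⟨m, hm⟩ : Fin n)) = univ.filter (fun j => j.1 ≤ m) := by
    ext j; simp [Fin.le_def]
  rw [h1, Finset.sum_filter]
  have h2 : ∑ j : Fin n, (if j.1 ≤ m then f j else 0)
      = ∑ j ∈ range n, (if j ≤ m then (if hj : j < n then f ⟨j, hj⟩ else 0) else 0) := by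
    rw [← Fin.sum_univ_eq_sum_range]
    apply Finset.sum_congr rfl
    intro j _
    by_cases hj : j.1 ≤ m <;> simp [hj]
  rw [h2]
  have h3 : range n = range (m+1) ∪ Ico (m+1) n := by
    rw [range_eq_Ico, range_eq_Ico]
    exact (Finset.Ico_union_Ico_eq_Ico (a := 0) (b := m+1) (c := n) (Nat.zero_le _) (by omega)).symm
  rw [h3, Finset.sum_union (by
        rw [Finset.disjoint_left]
        intro x hx hx'
        rw [Finset.mem_range] at hx
        rw [Finset.mem_Ico] at hx'
        omega)]
  have h4 : ∑ j ∈ Ico (m+1) n, (if j ≤ m then (if hj : j < n then f ⟨j, hj⟩ else 0) else 0) = 0 := by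
    apply Finset.sum_eq_zero
    intro j hj
    rw [Finset.mem_Ico] at hj
    rw [if_neg (by omega)]
  rw [h4, add_zero]
  apply Finset.sum_congr rfl
  intro j hj
  rw [Finset.mem_range] at hj
  rw [if_pos (by omega)]

private lemma stmt2_core {n : ℕ} (a lam : Fin n → ℝ) (amono : Monotone a)
    (hl : Antitone lam) (hlnn : ∀ i, 0 ≤ lam i)
    (S : Fin n → Fin n → ℝ) (hS0 : ∀ i j, 0 ≤ S i j)
    (hrow : ∀ i, ∑ j, S i j ≤ 1) (hcol : ∀ j, 0 < lam j → ∑ i, S i j = 1) :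
    ∑ j, lam j * a j ≤ ∑ j, lam j * ∑ i, a i * S i j := by
  set c : Fin n → ℝ := fun j => ∑ i, a i * S i j with hcdef
  have hpartial : ∀ k : Fin n, 0 < lam k →
      ∑ j ∈ Iic k, a j ≤ ∑ j ∈ Iic k, c j := by
    intro k hk
    set r : Fin n → ℝ := fun i => ∑ j ∈ Iic k, S i j with hrdef
    have hr0 : ∀ i, 0 ≤ r i := fun i => Finset.sum_nonneg fun j _ => hS0 i j
    have hr1 : ∀ i, r i ≤ 1 := by
      intro i
      refine le_trans ?_ (hrow i)
      exact Finset.sum_le_sum_of_subset_of_nonneg (Finset.subset_univ _) (fun j _ _ => hS0 i j)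
    have hfil : (Iic k) = univ.filter (fun i => i ≤ k) := by ext j; simp
    have hsum : ∑ i, r i = ∑ i, (if i ≤ k then (1:ℝ) else 0) := by
      have h1 : ∑ i, (if i ≤ k then (1:ℝ) else 0) = ∑ j ∈ Iic k, (1:ℝ) := by
        rw [hfil, Finset.sum_filter]
      rw [h1, hrdef, Finset.sum_comm]
      apply Finset.sum_congr rfl
      intro j hj
      exact hcol j (lt_of_lt_of_le hk (hl (mem_Iic.mp hj)))
    have hL1 := stmt2_L1 k a r amono hr0 hr1 hsum
    calc ∑ j ∈ Iic k, a j = ∑ i, (if i ≤ k then a i else 0) := by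
          rw [hfil, Finset.sum_filter]
      _ ≤ ∑ i, a i * r i := hL1
      _ = ∑ j ∈ Iic k, c j := by
          simp only [hrdef, Finset.mul_sum, hcdef]
          exact Finset.sum_comm
  let F : ℕ → ℝ := fun m => if hm : m < n then lam ⟨m, hm⟩ else 0
  let XA : ℕ → ℝ := fun m => if hm : m < n then a ⟨m, hm⟩ else 0
  let XC : ℕ → ℝ := fun m => if hm : m < n then c ⟨m, hm⟩ else 0
  have hXA : ∀ (m) (hm : m < n), ∑ j ∈ range (m+1), XA j = ∑ j ∈ Iic (⟨m,hm⟩:Fin n), a j :=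
    fun m hm => stmt2_sumIic a m hm
  have hXC : ∀ (m) (hm : m < n), ∑ j ∈ range (m+1), XC j = ∑ j ∈ Iic (⟨m,hm⟩:Fin n), c j :=
    fun m hm => stmt2_sumIic c m hm
  have eA : ∑ j, lam j * a j = ∑ m ∈ range n, F m • XA m := by
    rw [← Fin.sum_univ_eq_sum_range (fun m => F m • XA m) n]
    apply Finset.sum_congr rfl
    intro j _
    simp [F, XA, j.2]
  have eC : ∑ j, lam j * c j = ∑ m ∈ range n, F m • XC m := by
    rw [← Fin.sum_univ_eq_sum_range (fun m => F m • XC m) n]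
    apply Finset.sum_congr rfl
    intro j _
    simp [F, XC, j.2]
  have hFnn : ∀ m, 0 ≤ F m := by
    intro m
    by_cases hm : m < n
    · simp only [F, dif_pos hm]; exact hlnn _
    · simp only [F, dif_neg hm]; exact le_refl 0
  have hFanti : ∀ m, F (m+1) ≤ F m := by
    intro m
    by_cases hm1 : m + 1 < n
    · have hm : m < n := by omega
      simp only [F, dif_pos hm1, dif_pos hm]
      exact hl (by simp [Fin.le_def])
    · simp only [F, dif_neg hm1]
      exact hFnn m
  rw [eA, eC, Finset.sum_range_by_parts F XA n, Finset.sum_range_by_parts F XC n]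
  apply sub_le_sub
  · rcases eq_or_lt_of_le (hFnn (n-1)) with h0 | h0
    · rw [← h0]; simp
    · have hn : 0 < n := by
        by_contra hn
        have : ¬ (n - 1 < n) := by omega
        simp only [F, dif_neg this] at h0
        exact lt_irrefl 0 h0
      have hm : n - 1 < n := by omega
      have hlam : 0 < lam ⟨n-1, hm⟩ := by
        simpa only [F, dif_pos hm] using h0
      have hP := hpartial ⟨n-1, hm⟩ hlam
      rw [← hXA _ hm, ← hXC _ hm] at hP
      have hsucc : n - 1 + 1 = n := by omega
      rw [hsucc] at hP
      simp only [smul_eq_mul]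
      exact mul_le_mul_of_nonneg_left hP h0.le
  · apply Finset.sum_le_sum
    intro i hi
    rw [Finset.mem_range] at hi
    have hin : i < n := by omega
    rcases eq_or_lt_of_le (hFanti i) with heq | hlt
    · rw [heq, sub_self, zero_smul, zero_smul]
    · have hpos : 0 < F i := lt_of_le_of_lt (hFnn (i+1)) hlt
      have hlam : 0 < lam ⟨i, hin⟩ := by
        simpa only [F, dif_pos hin] using hpos
      have hP := hpartial ⟨i, hin⟩ hlam
      rw [← hXA _ hin, ← hXC _ hin] at hP
      have hcoef : F (i+1) - F i ≤ 0 := by linarith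
      simp only [smul_eq_mul]
      exact mul_le_mul_of_nonpos_left hP hcoef

private lemma psd_diag_nonneg {m : Type*} [Fintype m] [DecidableEq m]
    {A : Matrix m m ℝ} (hA : A.PosSemidef) (i : m) : 0 ≤ A i i := by
  exact hA.diag_nonneg

/-- If `H = diag h` with `h₁ ≥ … ≥ hₙ > 0`, `V ⪰ 0`, and `lam₁ ≥ … ≥ lamₙ ≥ 0` are the
eigenvalues of `V^{1/2}HᵀHV^{1/2}` (witnessed by an orthogonal `U`), then
`∑ lamᵢ/hᵢ² ≤ Tr V`, and the diagonal matrix `diag(lamᵢ/hᵢ²)` is PSD, has trace `≤ Tr V`,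
and its PSD square root conjugates `HᵀH` to `diag lam`. -/
theorem stmt2 {n : ℕ} (h lam : Fin n → ℝ) (hmono : Antitone h) (hpos : ∀ i, 0 < h i)
    (V : Matrix (Fin n) (Fin n) ℝ) (hV : V.PosSemidef)
    (hlmono : Antitone lam) (hlnn : ∀ i, 0 ≤ lam i)
    (U : Matrix (Fin n) (Fin n) ℝ) (hU : Uᵀ * U = 1)
    (heig : hV.sqrt * (diagonal h)ᵀ * diagonal h * hV.sqrt
              = U * diagonal lam * Uᵀ) :
    (∑ i, lam i / (h i) ^ 2) ≤ V.trace ∧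
    ∃ hps : (diagonal (fun i => lam i / (h i) ^ 2)).PosSemidef,
      (diagonal (fun i => lam i / (h i) ^ 2)).trace ≤ V.trace ∧
      hps.sqrt * (diagonal h)ᵀ * diagonal h * hps.sqrt = diagonal lam := by
  have hdt : (diagonal h)ᵀ = diagonal h := diagonal_transpose h
  set N := hV.sqrt with hNdef
  have hNh : Nᵀ = N := by
    have h1 := hV.posSemidef_sqrt.1
    rwa [Matrix.IsHermitian, conjTranspose_eq_transpose_of_trivial] at h1
  have hNN : N * N = V := hV.sqrt_mul_self
  have hUUt : U * Uᵀ = 1 := mul_eq_one_comm.mp hU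
  set Q := diagonal h * N * U with hQdef
  have hQt : Qᵀ = Uᵀ * N * diagonal h := by
    rw [hQdef, transpose_mul, transpose_mul, hNh, hdt, mul_assoc]
  have hQtQ : Qᵀ * Q = diagonal lam := by
    rw [hQt, hQdef]
    have h1 : Uᵀ * N * diagonal h * (diagonal h * N * U)
        = Uᵀ * (N * (diagonal h)ᵀ * diagonal h * N) * U := by
      rw [hdt]; simp only [mul_assoc]
    rw [h1, heig]
    calc Uᵀ * (U * diagonal lam * Uᵀ) * U
        = (Uᵀ * U) * diagonal lam * (Uᵀ * U) := by simp only [mul_assoc]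
      _ = diagonal lam := by rw [hU, one_mul, mul_one]
  -- trace identity
  set a : Fin n → ℝ := fun i => ((h i)^2)⁻¹ with hadef
  have hmid : diagonal h * diagonal a * diagonal h = 1 := by
    rw [diagonal_mul_diagonal, diagonal_mul_diagonal]
    have : (fun i => h i * a i * h i) = fun _ => (1:ℝ) := by
      funext i
      have hne : h i ≠ 0 := ne_of_gt (hpos i)
      rw [show h i * a i * h i = h i ^ 2 * (h i ^ 2)⁻¹ by simp only [hadef]; ring]
      exact mul_inv_cancel₀ (pow_ne_zero 2 hne)
    rw [this, diagonal_one]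
  have hNdN : N * diagonal h * diagonal a * diagonal h * N = V := by
    calc N * diagonal h * diagonal a * diagonal h * N
        = N * (diagonal h * diagonal a * diagonal h) * N := by simp only [mul_assoc]
      _ = N * 1 * N := by rw [hmid]
      _ = V := by rw [mul_one, hNN]
  have hDQ : Qᵀ * (diagonal a * Q) = Uᵀ * V * U := by
    calc Qᵀ * (diagonal a * Q)
        = Uᵀ * N * diagonal h * (diagonal a * (diagonal h * N * U)) := by rw [hQt, hQdef]
      _ = Uᵀ * (N * diagonal h * diagonal a * diagonal h * N) * U := by simp only [mul_assoc]
      _ = Uᵀ * V * U := by rw [hNdN]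
  have htr : V.trace = ∑ j, ∑ i, a i * Q i j ^ 2 := by
    have h1 : (Qᵀ * (diagonal a * Q)).trace = V.trace := by
      rw [hDQ, Matrix.trace_mul_cycle, hUUt, one_mul]
    rw [← h1]
    rw [Matrix.trace]
    apply Finset.sum_congr rfl
    intro j _
    rw [Matrix.diag]
    rw [Matrix.mul_apply]
    apply Finset.sum_congr rfl
    intro i _
    rw [Matrix.transpose_apply, Matrix.mul_apply]
    rw [Finset.sum_eq_single i]
    · rw [Matrix.diagonal_apply_eq]; ring
    · intro b _ hb
      rw [Matrix.diagonal_apply_ne' _ hb, zero_mul]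
    · intro hi; exact absurd (Finset.mem_univ i) hi
  have hcolQ : ∀ j, ∑ i, Q i j ^ 2 = lam j := by
    intro j
    have h1 := congrFun (congrFun hQtQ j) j
    rw [Matrix.mul_apply, Matrix.diagonal_apply_eq] at h1
    rw [← h1]
    apply Finset.sum_congr rfl
    intro i _
    rw [Matrix.transpose_apply]
    ring
  -- row sums
  set g : Fin n → ℝ := fun j => if 0 < lam j then (Real.sqrt (lam j))⁻¹ else 0 with hgdef
  set e : Fin n → ℝ := fun j => if 0 < lam j then (1:ℝ) else 0 with hedef
  set R := Q * diagonal g with hRdef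
  have hRtR : Rᵀ * R = diagonal e := by
    rw [hRdef, transpose_mul, diagonal_transpose]
    calc diagonal g * Qᵀ * (Q * diagonal g)
        = diagonal g * (Qᵀ * Q) * diagonal g := by simp only [mul_assoc]
      _ = diagonal g * diagonal lam * diagonal g := by rw [hQtQ]
      _ = diagonal e := by
          rw [diagonal_mul_diagonal, diagonal_mul_diagonal, Matrix.diagonal_eq_diagonal_iff]
          intro j
          by_cases hj : 0 < lam j
          · have hs : Real.sqrt (lam j) ≠ 0 := ne_of_gt (Real.sqrt_pos.mpr hj)
            have hms : Real.sqrt (lam j) * Real.sqrt (lam j) = lam j :=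
              Real.mul_self_sqrt (hlnn j)
            simp only [hgdef, hedef, if_pos hj]
            field_simp
            exact (Real.sq_sqrt (hlnn j)).symm
          · simp only [hgdef, hedef, if_neg hj]
            ring
  have hge : ∀ j, g j * e j = g j := by
    intro j
    by_cases hj : 0 < lam j <;> simp [hgdef, hedef, hj]
  have hRe : R * diagonal e = R := by
    rw [hRdef, mul_assoc, diagonal_mul_diagonal]
    congr 1
    rw [Matrix.diagonal_eq_diagonal_iff]
    exact hge
  have hPP : (R * Rᵀ) * (R * Rᵀ) = R * Rᵀ := by
    calc (R * Rᵀ) * (R * Rᵀ) = R * (Rᵀ * R) * Rᵀ := by simp only [mul_assoc]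
      _ = R * diagonal e * Rᵀ := by rw [hRtR]
      _ = R * Rᵀ := by rw [hRe]
  have hPsym : (R * Rᵀ)ᵀ = R * Rᵀ := by rw [transpose_mul, transpose_transpose]
  have hIP : (1 - R * Rᵀ).PosSemidef := by
    have h1 : (1 - R * Rᵀ)ᵀ * (1 - R * Rᵀ) = 1 - R * Rᵀ := by
      rw [transpose_sub, transpose_one, hPsym]
      calc (1 - R * Rᵀ) * (1 - R * Rᵀ)
          = 1 - R * Rᵀ - R * Rᵀ + (R * Rᵀ) * (R * Rᵀ) := by noncomm_ring
        _ = 1 - R * Rᵀ := by rw [hPP]; abel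
    have h2 := posSemidef_conjTranspose_mul_self (1 - R * Rᵀ)
    rwa [conjTranspose_eq_transpose_of_trivial, h1] at h2
  have hRent : ∀ i j, R i j = Q i j * g j := by
    intro i j
    rw [hRdef, Matrix.mul_diagonal]
  have hrowS : ∀ i, ∑ j, Q i j ^ 2 * g j ^ 2 ≤ 1 := by
    intro i
    have h1 := psd_diag_nonneg hIP i
    have h2 : (1 - R * Rᵀ) i i = 1 - ∑ j, Q i j ^ 2 * g j ^ 2 := by
      rw [Matrix.sub_apply, Matrix.one_apply_eq, Matrix.mul_apply]
      congr 1
      apply Finset.sum_congr rfl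
      intro j _
      rw [Matrix.transpose_apply, hRent]
      ring
    rw [h2] at h1
    linarith
  set S : Fin n → Fin n → ℝ := fun i j => Q i j ^ 2 * g j ^ 2 with hSdef
  have hS0 : ∀ i j, 0 ≤ S i j := fun i j => mul_nonneg (sq_nonneg _) (sq_nonneg _)
  have hg1 : ∀ j, 0 < lam j → lam j * g j ^ 2 = 1 := by
    intro j hj
    simp only [hgdef, if_pos hj]
    rw [inv_pow, Real.sq_sqrt (hlnn j)]
    exact mul_inv_cancel₀ (ne_of_gt hj)
  have hcolS : ∀ j, 0 < lam j → ∑ i, S i j = 1 := by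
    intro j hj
    have h1 : ∑ i, S i j = (∑ i, Q i j ^ 2) * g j ^ 2 := by
      rw [Finset.sum_mul]
    rw [h1, hcolQ j, ← hg1 j hj, mul_comm]
  have hanonneg : ∀ i, 0 ≤ a i := fun i => inv_nonneg.mpr (sq_nonneg _)
  have hamono : Monotone a := by
    intro i j hij
    have h1 : h j ≤ h i := hmono hij
    have h2 : 0 < h j := hpos j
    simp only [hadef]
    apply inv_anti₀ (pow_pos h2 2)
    exact pow_le_pow_left₀ h2.le h1 2
  have hmain := stmt2_core a lam hamono hlmono hlnn S hS0 hrowS hcolS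
  have hstep2 : ∑ j, lam j * ∑ i, a i * S i j ≤ ∑ j, ∑ i, a i * Q i j ^ 2 := by
    apply Finset.sum_le_sum
    intro j _
    by_cases hj : 0 < lam j
    · apply le_of_eq
      rw [Finset.mul_sum]
      apply Finset.sum_congr rfl
      intro i _
      calc lam j * (a i * S i j) = a i * Q i j ^ 2 * (lam j * g j ^ 2) := by
            simp only [hSdef]; ring
        _ = a i * Q i j ^ 2 := by rw [hg1 j hj, mul_one]
    · have hj0 : lam j = 0 := le_antisymm (not_lt.mp hj) (hlnn j)
      rw [hj0, zero_mul]
      exact Finset.sum_nonneg fun i _ => mul_nonneg (hanonneg i) (sq_nonneg _)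
  have hfirst : (∑ i, lam i / (h i) ^ 2) ≤ V.trace := by
    have h1 : (∑ i, lam i / (h i) ^ 2) = ∑ j, lam j * a j := by
      apply Finset.sum_congr rfl
      intro i _
      rw [hadef, div_eq_mul_inv]
    rw [h1, htr]
    exact le_trans hmain hstep2
  have hps : (diagonal (fun i => lam i / (h i) ^ 2)).PosSemidef :=
    posSemidef_diagonal_iff.mpr fun i => div_nonneg (hlnn i) (sq_nonneg _)
  refine ⟨hfirst, hps, ?_, ?_⟩
  · rw [Matrix.trace_diagonal]
    exact hfirst
  · set s : Fin n → ℝ := fun i => Real.sqrt (lam i) / h i with hsdef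
    have hs_psd : (diagonal s).PosSemidef :=
      posSemidef_diagonal_iff.mpr fun i => div_nonneg (Real.sqrt_nonneg _) (hpos i).le
    have hsq : (diagonal s) ^ 2 = diagonal (fun i => lam i / (h i) ^ 2) := by
      rw [pow_two, diagonal_mul_diagonal, Matrix.diagonal_eq_diagonal_iff]
      intro i
      simp only [hsdef]
      rw [div_mul_div_comm, Real.mul_self_sqrt (hlnn i), pow_two]
    have hsqrt : hps.sqrt = diagonal s := (hs_psd.eq_sqrt_of_sq_eq hps hsq).symm
    rw [hsqrt, diagonal_transpose, diagonal_mul_diagonal, diagonal_mul_diagonal,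
      diagonal_mul_diagonal, Matrix.diagonal_eq_diagonal_iff]
    intro i
    have hne : h i ≠ 0 := ne_of_gt (hpos i)
    have hms : Real.sqrt (lam i) * Real.sqrt (lam i) = lam i := Real.mul_self_sqrt (hlnn i)
    simp only [hsdef]
    field_simp
    linear_combination hms
end

section
/- Let A = diag(a₁, …, a_k) with |a_j| > 1 for all j and pairwise distinct diagonal entries, let h ≠ 0 be a real scalar, and let p > 0. Then there exist a row vector Γ ∈ ℝ^{1×k} and a positive definite matrix J̃ ∈ ℝ^{k×k} satisfying the Lyapunov equation J̃ = A⁻¹J̃A⁻ᵀ − (1/(1 + h²p)) ΓᵀΓ + A⁻¹ΓᵀΓA⁻ᵀ if and only if 1 + h²p > (∏_{j=1}^{k} a_j)². -/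
open Matrix

namespace Stmt6Aux

variable {k : ℕ}

lemma dot_symm (M : Matrix (Fin k) (Fin k) ℝ) (hM : M.IsHermitian) (y z : Fin k → ℝ) :
    y ⬝ᵥ M *ᵥ z = z ⬝ᵥ M *ᵥ y := by
  have hsym : ∀ i j, M i j = M j i := fun i j => by
    simpa using congrFun (congrFun hM j) i
  simp only [dotProduct, mulVec, Finset.mul_sum]
  rw [Finset.sum_comm]
  refine Finset.sum_congr rfl fun j _ => Finset.sum_congr rfl fun i _ => ?_
  rw [hsym i j]; ring

lemma cs_psd (M : Matrix (Fin k) (Fin k) ℝ) (hM : M.PosSemidef) (v x : Fin k → ℝ) :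
    (v ⬝ᵥ M *ᵥ x) ^ 2 ≤ (v ⬝ᵥ M *ᵥ v) * (x ⬝ᵥ M *ᵥ x) := by
  have hq : ∀ t : ℝ, 0 ≤ (v ⬝ᵥ M *ᵥ v) * (t * t) + (2 * (v ⬝ᵥ M *ᵥ x)) * t + x ⬝ᵥ M *ᵥ x := by
    intro t
    have h0 := hM.dotProduct_mulVec_nonneg (t • v + x)
    simp only [star_trivial] at h0
    have hexp : (t • v + x) ⬝ᵥ M *ᵥ (t • v + x)
        = (v ⬝ᵥ M *ᵥ v) * (t * t) + (2 * (v ⬝ᵥ M *ᵥ x)) * t + x ⬝ᵥ M *ᵥ x := by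
      rw [mulVec_add, mulVec_smul, dotProduct_add, add_dotProduct, add_dotProduct,
        smul_dotProduct, smul_dotProduct, dotProduct_smul, dotProduct_smul,
        dot_symm M hM.1 x v]
      simp only [smul_eq_mul]
      ring
    linarith [hexp ▸ h0]
  have hd := discrim_le_zero hq
  rw [discrim] at hd
  nlinarith

lemma vecMulVec_quad (u x : Fin k → ℝ) :
    x ⬝ᵥ (vecMulVec u u) *ᵥ x = (u ⬝ᵥ x) ^ 2 := by
  simp only [dotProduct, mulVec, vecMulVec_apply, Finset.mul_sum]
  rw [pow_two, Finset.sum_mul_sum]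
  refine Finset.sum_congr rfl fun i _ => Finset.sum_congr rfl fun j _ => by ring

lemma vecMulVec_herm (u : Fin k → ℝ) : (vecMulVec u u).IsHermitian := by
  ext i j
  simp [vecMulVec_apply, mul_comm]

lemma vecMulVec_psd (u : Fin k → ℝ) : (vecMulVec u u).PosSemidef := by
  refine PosSemidef.of_dotProduct_mulVec_nonneg (vecMulVec_herm u) fun x => ?_
  simp only [star_trivial]
  rw [vecMulVec_quad]
  positivity

lemma det_sub_smul_outer (M : Matrix (Fin k) (Fin k) ℝ) (hM : IsUnit M.det)
    (d : ℝ) (u : Fin k → ℝ) :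
    (M - d • vecMulVec u u).det = M.det * (1 - d * (u ⬝ᵥ M⁻¹ *ᵥ u)) := by
  have h1 : M - d • vecMulVec u u
      = M + replicateCol (Fin 1) ((-d) • u) * replicateRow (Fin 1) u := by
    rw [show replicateCol (Fin 1) ((-d) • u) * replicateRow (Fin 1) u = vecMulVec ((-d) • u) u
      from (vecMulVec_eq (Fin 1) _ _).symm]
    ext i j
    simp [vecMulVec_apply]
    ring
  rw [h1, det_add_mul _ _ hM]
  congr 1
  rw [det_fin_one, Matrix.add_apply, Matrix.one_apply_eq]
  rw [Matrix.mul_assoc, ← replicateCol_mulVec, replicateRow_mul_replicateCol_apply, mulVec_smul, dotProduct_smul,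
    smul_eq_mul]
  ring

lemma posdef_sub_outer (M : Matrix (Fin k) (Fin k) ℝ) (hM : M.PosDef) (u : Fin k → ℝ)
    (ht : u ⬝ᵥ M⁻¹ *ᵥ u < 1) : (M - vecMulVec u u).PosDef := by
  refine PosDef.of_dotProduct_mulVec_pos (hM.1.sub (vecMulVec_herm u)) fun x hx => ?_
  simp only [star_trivial]
  rw [sub_mulVec, dotProduct_sub, vecMulVec_quad]
  set v : Fin k → ℝ := M⁻¹ *ᵥ u with hv
  have hMv : M *ᵥ v = u := by
    rw [hv, mulVec_mulVec, Matrix.mul_nonsing_inv _ (isUnit_iff_ne_zero.mpr hM.det_pos.ne'),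
      one_mulVec]
  have hux : u ⬝ᵥ x = v ⬝ᵥ M *ᵥ x := by
    rw [← hMv, dotProduct_comm, dot_symm M hM.1 x v]
  have hvv : v ⬝ᵥ M *ᵥ v = u ⬝ᵥ M⁻¹ *ᵥ u := by
    rw [hMv, dotProduct_comm]
  have hcs := cs_psd M hM.posSemidef v x
  have hMx := hM.dotProduct_mulVec_pos hx
  simp only [star_trivial] at hMx
  rw [hux]
  nlinarith [hcs, hvv, ht, hMx]

lemma pick_posDef (b : Fin k → ℝ) (hb : ∀ i, |b i| < 1) (hbinj : Function.Injective b) :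
    (Matrix.of fun i j : Fin k => (1 - b i * b j)⁻¹).PosDef := by
  have habs : ∀ i j, |b i * b j| < 1 := by
    intro i j
    rw [abs_mul]
    nlinarith [abs_nonneg (b i), abs_nonneg (b j), hb i, hb j]
  refine PosDef.of_dotProduct_mulVec_pos ?_ fun x hx => ?_
  · ext i j
    simp [Matrix.conjTranspose_apply, mul_comm]
  · simp only [star_trivial]
    set f : ℕ → ℝ := fun n => (∑ i, x i * b i ^ n) ^ 2 with hf
    have hsummand : ∀ p : Fin k × Fin k,
        Summable (fun n : ℕ => (x p.1 * x p.2) * (b p.1 * b p.2) ^ n) := fun p =>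
      (summable_geometric_of_norm_lt_one (x := b p.1 * b p.2)
        (by rw [Real.norm_eq_abs]; exact habs p.1 p.2)).mul_left _
    have hfeq : ∀ n : ℕ,
        (∑ p : Fin k × Fin k, (x p.1 * x p.2) * (b p.1 * b p.2) ^ n) = f n := by
      intro n
      show _ = (∑ i, x i * b i ^ n) ^ 2
      rw [pow_two, Finset.sum_mul_sum, Fintype.sum_prod_type]
      refine Finset.sum_congr rfl fun i _ => Finset.sum_congr rfl fun j _ => by
        rw [mul_pow]; ring
    have hsumf : Summable f := by
      exact Summable.congr (summable_sum fun p _ => hsummand p) hfeq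
    have key : x ⬝ᵥ (Matrix.of fun i j : Fin k => (1 - b i * b j)⁻¹) *ᵥ x = ∑' n, f n := by
      have h1 : x ⬝ᵥ (Matrix.of fun i j : Fin k => (1 - b i * b j)⁻¹) *ᵥ x
          = ∑ p : Fin k × Fin k, (x p.1 * x p.2) * (1 - b p.1 * b p.2)⁻¹ := by
        simp only [dotProduct, mulVec, Matrix.of_apply, Finset.mul_sum, Fintype.sum_prod_type]
        refine Finset.sum_congr rfl fun i _ => Finset.sum_congr rfl fun j _ => by ring
      have h2 : ∀ p : Fin k × Fin k, (x p.1 * x p.2) * (1 - b p.1 * b p.2)⁻¹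
          = ∑' n : ℕ, (x p.1 * x p.2) * (b p.1 * b p.2) ^ n := by
        intro p
        rw [tsum_mul_left, tsum_geometric_of_norm_lt_one
          (by rw [Real.norm_eq_abs]; exact habs p.1 p.2)]
      rw [h1]
      calc ∑ p : Fin k × Fin k, (x p.1 * x p.2) * (1 - b p.1 * b p.2)⁻¹
          = ∑ p : Fin k × Fin k, ∑' n : ℕ, (x p.1 * x p.2) * (b p.1 * b p.2) ^ n :=
            Finset.sum_congr rfl fun p _ => h2 p
        _ = ∑' n : ℕ, ∑ p : Fin k × Fin k, (x p.1 * x p.2) * (b p.1 * b p.2) ^ n :=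
            (Summable.tsum_finsetSum fun p _ => hsummand p).symm
        _ = ∑' n, f n := tsum_congr fun n => hfeq n
    rw [key]
    have hnz : ∃ n : ℕ, (∑ i, x i * b i ^ n) ≠ 0 := by
      by_contra hall
      push_neg at hall
      apply hx
      have hV : IsUnit (Matrix.vandermonde b).det := by
        rw [Matrix.det_vandermonde]
        refine isUnit_iff_ne_zero.mpr (Finset.prod_ne_zero_iff.mpr fun i _ =>
          Finset.prod_ne_zero_iff.mpr fun j hj => sub_ne_zero.mpr fun hEq => ?_)
        have hij : i < j := Finset.mem_Ioi.mp hj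
        exact absurd (hbinj hEq) hij.ne'
      have h0 : x ᵥ* Matrix.vandermonde b = 0 := by
        funext j
        simpa [Matrix.vecMul, dotProduct, Matrix.vandermonde_apply] using hall (j : ℕ)
      exact Matrix.vecMul_injective_iff_isUnit.mpr ((Matrix.isUnit_iff_isUnit_det _).mpr hV)
        (h0.trans (Matrix.zero_vecMul _).symm)
    obtain ⟨n, hn⟩ := hnz
    exact Summable.tsum_pos hsumf (fun m => sq_nonneg _) n
      (lt_of_le_of_ne (sq_nonneg _) (Ne.symm (pow_ne_zero 2 hn)))

end Stmt6Aux

open Stmt6Aux in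
/-- Core Lyapunov computation for the scalar-channel case: there exist a row vector `Γ`
and a positive definite `J` with `J = A⁻¹JA⁻ᵀ − (1/(1+h²p)) ΓᵀΓ + A⁻¹ΓᵀΓA⁻ᵀ`
iff `1 + h²p > (∏ aⱼ)²`. -/
theorem stmt6 {k : ℕ} (a : Fin k → ℝ) (ha : ∀ j, 1 < |a j|)
    (hdist : Function.Injective a) (h p : ℝ) (hh : h ≠ 0) (hp : 0 < p) :
    (∃ (Γ : Matrix (Fin 1) (Fin k) ℝ) (J : Matrix (Fin k) (Fin k) ℝ),
      J.PosDef ∧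
      J = (diagonal a)⁻¹ * J * ((diagonal a)⁻¹)ᵀ
            - (1 / (1 + h ^ 2 * p)) • (Γᵀ * Γ)
            + (diagonal a)⁻¹ * Γᵀ * Γ * ((diagonal a)⁻¹)ᵀ) ↔
    1 + h ^ 2 * p > (∏ j, a j) ^ 2 := by
  -- common setup
  have hh2 : 0 < h ^ 2 := by rw [← sq_abs]; exact pow_pos (abs_pos.mpr hh) 2
  have hq : (0:ℝ) < 1 + h ^ 2 * p := by nlinarith
  set c : ℝ := 1 / (1 + h ^ 2 * p) with hcdef
  have hc0 : 0 < c := by positivity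
  have hc1 : c < 1 := by
    rw [hcdef, div_lt_one hq]; nlinarith
  have ha0 : ∀ j, a j ≠ 0 := by
    intro j h0
    have := ha j
    rw [h0] at this
    simp at this
    linarith
  set b : Fin k → ℝ := fun j => (a j)⁻¹ with hbdef
  have hb0 : ∀ j, b j ≠ 0 := fun j => inv_ne_zero (ha0 j)
  have hbabs : ∀ j, |b j| < 1 := by
    intro j
    rw [hbdef, abs_inv]
    rw [inv_lt_one_iff₀]
    right; exact ha j
  have hAinv : (diagonal a)⁻¹ = diagonal b := by
    refine Matrix.inv_eq_right_inv ?_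
    rw [diagonal_mul_diagonal, ← diagonal_one]
    exact congrArg diagonal (funext fun j => mul_inv_cancel₀ (ha0 j))
  have hprodne : (∏ j, a j) ≠ 0 := Finset.prod_ne_zero_iff.mpr fun j _ => ha0 j
  have hprodsq : 0 < (∏ j, a j) ^ 2 :=
    lt_of_le_of_ne (sq_nonneg _) (Ne.symm (pow_ne_zero 2 hprodne))
  have hdetb : (diagonal b).det = (∏ j, a j)⁻¹ := by
    rw [det_diagonal, hbdef, ← Finset.prod_inv_distrib]
  have hdetDXD : ∀ X : Matrix (Fin k) (Fin k) ℝ,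
      (diagonal b * X * diagonal b).det = ((∏ j, a j) ^ 2)⁻¹ * X.det := by
    intro X
    rw [det_mul, det_mul, hdetb]
    rw [← inv_pow]
    ring
  constructor
  · -- forward
    rintro ⟨Γ, J, hJ, heq⟩
    rw [hAinv, diagonal_transpose] at heq
    set D := diagonal b with hDdef
    set u : Fin k → ℝ := fun i => Γ 0 i with hu
    have hE : Γᵀ * Γ = vecMulVec u u := by
      ext i j
      simp [Matrix.mul_apply, Fin.sum_univ_one, vecMulVec_apply, hu]
    set M : Matrix (Fin k) (Fin k) ℝ := J + vecMulVec u u with hM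
    have hMpd : M.PosDef := hJ.add_posSemidef (vecMulVec_psd u)
    have hMdet : IsUnit M.det := isUnit_iff_ne_zero.mpr hMpd.det_pos.ne'
    have hMeq : D * M * D = M - (1 - c) • vecMulVec u u := by
      have h1 : D * M * D = D * J * D + D * (Γᵀ * Γ) * D := by
        rw [hM, Matrix.mul_add, Matrix.add_mul, hE]
      have h2 : D * (Γᵀ * Γ) * D = D * Γᵀ * Γ * D := by
        rw [Matrix.mul_assoc D Γᵀ Γ]
      rw [h1, h2, hM]
      nth_rewrite 2 [heq]
      rw [hE]
      module
    set s : ℝ := u ⬝ᵥ M⁻¹ *ᵥ u with hs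
    have hdet1 : ((∏ j, a j) ^ 2)⁻¹ * M.det = M.det * (1 - (1 - c) * s) := by
      rw [← hdetDXD M, hMeq, det_sub_smul_outer M hMdet]
    have hkey : 1 - (1 - c) * s = ((∏ j, a j) ^ 2)⁻¹ := by
      have h' : M.det * ((∏ j, a j) ^ 2)⁻¹ = M.det * (1 - (1 - c) * s) := by
        linarith [hdet1]
      exact (mul_left_cancel₀ hMpd.det_pos.ne' h').symm
    have hs1 : s < 1 := by
      by_cases hu0 : u = 0
      · have : s = 0 := by rw [hs, hu0]; simp
        linarith
      · set x : Fin k → ℝ := M⁻¹ *ᵥ u with hx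
        have hMx : M *ᵥ x = u := by
          rw [hx, mulVec_mulVec, Matrix.mul_nonsing_inv _ hMdet, one_mulVec]
        have hxne : x ≠ 0 := fun h0 => hu0 (by rw [← hMx, h0, mulVec_zero])
        have hJx := hJ.dotProduct_mulVec_pos hxne
        simp only [star_trivial] at hJx
        have hJM : J = M - vecMulVec u u := (add_sub_cancel_right J _).symm
        rw [hJM, sub_mulVec, dotProduct_sub, vecMulVec_quad] at hJx
        have h2 : u ⬝ᵥ x = s := by rw [hx, ← hs]
        have h1 : x ⬝ᵥ M *ᵥ x = s := by rw [hMx, dotProduct_comm, h2]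
        rw [h1, h2] at hJx
        nlinarith
    have hlt : c < ((∏ j, a j) ^ 2)⁻¹ := by
      rw [← hkey]; nlinarith [hc1, hs1]
    have hPc : (∏ j, a j) ^ 2 * c < 1 := by
      calc (∏ j, a j) ^ 2 * c < (∏ j, a j) ^ 2 * ((∏ j, a j) ^ 2)⁻¹ :=
            mul_lt_mul_of_pos_left hlt hprodsq
        _ = 1 := mul_inv_cancel₀ hprodsq.ne'
    rw [hcdef, mul_one_div] at hPc
    exact (div_lt_one hq).mp hPc
  · -- backward
    intro hcap
    set D := diagonal b with hDdef
    set P : Matrix (Fin k) (Fin k) ℝ := Matrix.of fun i j : Fin k => (1 - b i * b j)⁻¹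
      with hPdef
    have hbinj : Function.Injective b := fun i j hij => hdist (inv_inj.mp hij)
    have hPpd : P.PosDef := pick_posDef b hbabs hbinj
    have hd0 : (0:ℝ) < 1 - c := by linarith
    set M : Matrix (Fin k) (Fin k) ℝ := (1 - c) • P with hM
    have hMpd : M.PosDef := by
      refine PosDef.of_dotProduct_mulVec_pos ?_ fun x hx => ?_
      · show ((1 - c) • P)ᴴ = (1 - c) • P
        rw [Matrix.conjTranspose_smul, star_trivial, hPpd.1.eq]
      · simp only [star_trivial]
        rw [hM, smul_mulVec, dotProduct_smul, smul_eq_mul]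
        have hPx := hPpd.dotProduct_mulVec_pos hx
        simp only [star_trivial] at hPx
        exact mul_pos hd0 hPx
    have hMdet : IsUnit M.det := isUnit_iff_ne_zero.mpr hMpd.det_pos.ne'
    set e : Fin k → ℝ := fun _ => 1 with hedef
    have hden : ∀ i j : Fin k, 1 - b i * b j ≠ 0 := by
      intro i j
      have habs : |b i * b j| < 1 := by
        rw [abs_mul]
        nlinarith [abs_nonneg (b i), abs_nonneg (b j), hbabs i, hbabs j]
      intro h0
      rw [sub_eq_zero] at h0
      rw [← h0] at habs
      simp at habs
    have hMeq : D * M * D = M - (1 - c) • vecMulVec e e := by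
      ext i j
      simp only [hDdef, hM, hPdef, Matrix.sub_apply, Matrix.smul_apply, Matrix.diagonal_mul,
        Matrix.mul_diagonal, vecMulVec_apply, Matrix.of_apply, smul_eq_mul, hedef, mul_one]
      field_simp [hden i j]
      ring
    set t : ℝ := e ⬝ᵥ M⁻¹ *ᵥ e with ht
    have hdet1 : ((∏ j, a j) ^ 2)⁻¹ * M.det = M.det * (1 - (1 - c) * t) := by
      rw [← hdetDXD M, hMeq, det_sub_smul_outer M hMdet]
    have hkey : 1 - (1 - c) * t = ((∏ j, a j) ^ 2)⁻¹ := by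
      have h' : M.det * ((∏ j, a j) ^ 2)⁻¹ = M.det * (1 - (1 - c) * t) := by
        linarith [hdet1]
      exact (mul_left_cancel₀ hMpd.det_pos.ne' h').symm
    have hct : c < ((∏ j, a j) ^ 2)⁻¹ := by
      rw [hcdef, one_div]
      exact inv_strictAnti₀ hprodsq hcap
    have ht1 : t < 1 := by
      have h1 : (1 - c) * t = 1 - ((∏ j, a j) ^ 2)⁻¹ := by linarith [hkey]
      have h2 : (1 - c) * t < (1 - c) * 1 := by
        rw [h1, mul_one]; linarith [hct]
      exact lt_of_mul_lt_mul_left h2 (le_of_lt hd0)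
    have hJpd := posdef_sub_outer M hMpd e ht1
    set Γ : Matrix (Fin 1) (Fin k) ℝ := Matrix.of fun _ _ => (1:ℝ) with hΓ
    have hE : Γᵀ * Γ = vecMulVec e e := by
      ext i j
      simp [hΓ, Matrix.mul_apply, vecMulVec_apply, hedef]
    refine ⟨Γ, M - vecMulVec e e, hJpd, ?_⟩
    rw [hAinv, diagonal_transpose]
    rw [Matrix.mul_assoc D Γᵀ Γ, hE]
    rw [Matrix.mul_sub, Matrix.sub_mul, hMeq]
    module
end

section
/- Let A = diag(a₁, …, a_k) with |a_j| > 1 for all j and pairwise distinct diagonal entries, and let 𝟙 ∈ ℝ^k be the all-ones column vector. Then there exists a unique matrix M ∈ ℝ^{k×k} satisfying M = A⁻¹MA⁻ᵀ + 𝟙𝟙ᵀ, and this M is symmetric positive definite. -/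
open Matrix

/-- The all-ones column vector in `ℝ^{k×1}`. -/
def onesCol (k : ℕ) : Matrix (Fin k) (Fin 1) ℝ := Matrix.of fun _ _ => (1 : ℝ)

/-- For `A = diag a` with `|aⱼ| > 1` and distinct entries, the Lyapunov equation
`M = A⁻¹MA⁻ᵀ + 𝟙𝟙ᵀ` has a unique solution, which is (symmetric) positive definite. -/
theorem stmt7 {k : ℕ} (a : Fin k → ℝ) (ha : ∀ j, 1 < |a j|)
    (hdist : Function.Injective a) :
    (∃! M : Matrix (Fin k) (Fin k) ℝ,
        M = (diagonal a)⁻¹ * M * ((diagonal a)⁻¹)ᵀ + onesCol k * (onesCol k)ᵀ) ∧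
    ∀ M : Matrix (Fin k) (Fin k) ℝ,
      M = (diagonal a)⁻¹ * M * ((diagonal a)⁻¹)ᵀ + onesCol k * (onesCol k)ᵀ →
      M.PosDef := by
  classical
  set x : Fin k → ℝ := fun j => (a j)⁻¹ with hxdef
  have hane : ∀ j, a j ≠ 0 := by
    intro j h
    have := ha j
    rw [h] at this; simp at this; linarith
  have hxlt : ∀ j, |x j| < 1 := by
    intro j
    have h0 : (0:ℝ) < |a j| := lt_trans one_pos (ha j)
    rw [hxdef]
    simp only [abs_inv]
    rw [inv_lt_one_iff₀]
    right; exact ha j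
  have hxabs : ∀ i j, |x i * x j| < 1 := by
    intro i j
    rw [abs_mul]
    nlinarith [abs_nonneg (x i), abs_nonneg (x j), hxlt i, hxlt j]
  have hne : ∀ i j, 1 - x i * x j ≠ 0 := by
    intro i j h0
    have hx : x i * x j = 1 := by linarith
    have := hxabs i j
    rw [hx] at this; simp at this
  have hAinv : (diagonal a)⁻¹ = diagonal x := by
    apply Matrix.inv_eq_right_inv
    rw [Matrix.diagonal_mul_diagonal]
    have h1 : (fun i => a i * x i) = fun _ => (1:ℝ) :=
      funext fun i => mul_inv_cancel₀ (hane i)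
    rw [h1, Matrix.diagonal_one]
  have hentry : ∀ (N : Matrix (Fin k) (Fin k) ℝ) (i j : Fin k),
      ((diagonal a)⁻¹ * N * ((diagonal a)⁻¹)ᵀ + onesCol k * (onesCol k)ᵀ) i j
        = x i * N i j * x j + 1 := by
    intro N i j
    rw [hAinv, Matrix.diagonal_transpose, Matrix.add_apply,
      Matrix.mul_diagonal, Matrix.diagonal_mul]
    have h1 : (onesCol k * (onesCol k)ᵀ) i j = 1 := by
      simp [onesCol, Matrix.mul_apply]
    rw [h1]
  set M : Matrix (Fin k) (Fin k) ℝ := Matrix.of fun i j => (1 - x i * x j)⁻¹ with hMdef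
  have hMsol : M = (diagonal a)⁻¹ * M * ((diagonal a)⁻¹)ᵀ + onesCol k * (onesCol k)ᵀ := by
    ext i j
    rw [hentry]
    have := hne i j
    show (1 - x i * x j)⁻¹ = x i * (1 - x i * x j)⁻¹ * x j + 1
    field_simp
    ring
  have huniq : ∀ N : Matrix (Fin k) (Fin k) ℝ,
      N = (diagonal a)⁻¹ * N * ((diagonal a)⁻¹)ᵀ + onesCol k * (onesCol k)ᵀ → N = M := by
    intro N hN
    ext i j
    have h1 : N i j = x i * N i j * x j + 1 := by
      conv_lhs => rw [hN]
      rw [hentry]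
    have h2 := hne i j
    show N i j = (1 - x i * x j)⁻¹
    field_simp
    linarith [h1]
  -- positive definiteness of M
  have hsummable : ∀ i j : Fin k, Summable (fun n : ℕ => (x i * x j) ^ n) := by
    intro i j
    exact summable_geometric_of_norm_lt_one (by rw [Real.norm_eq_abs]; exact hxabs i j)
  have hMij : ∀ i j, M i j = ∑' n : ℕ, (x i * x j) ^ n := by
    intro i j
    rw [tsum_geometric_of_norm_lt_one (by rw [Real.norm_eq_abs]; exact hxabs i j)]
    rfl
  have hMpd : M.PosDef := by
    rw [Matrix.posDef_iff_dotProduct_mulVec]; constructor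
    · ext i j
      show M j i = M i j
      simp only [hMdef, Matrix.of_apply]
      rw [mul_comm]
    · intro c hc
      have hquad : dotProduct (star c) (M *ᵥ c)
          = ∑' n : ℕ, (∑ i : Fin k, c i * x i ^ n) ^ 2 := by
        have hterm : ∀ (i j : Fin k),
            Summable (fun n : ℕ => (c i * x i ^ n) * (c j * x j ^ n)) := by
          intro i j
          have : (fun n : ℕ => (c i * x i ^ n) * (c j * x j ^ n))
              = fun n : ℕ => (c i * c j) * (x i * x j) ^ n := by
            funext n; rw [mul_pow]; ring
          rw [this]
          exact (hsummable i j).mul_left _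
        have hs1 : ∀ i : Fin k,
            Summable (fun n : ℕ => ∑ j : Fin k, (c i * x i ^ n) * (c j * x j ^ n)) := by
          intro i
          exact summable_sum fun j _ => hterm i j
        calc dotProduct (star c) (M *ᵥ c)
            = ∑ i : Fin k, ∑ j : Fin k, c i * (M i j * c j) := by
              simp [dotProduct, Matrix.mulVec, Finset.mul_sum]
          _ = ∑ i : Fin k, ∑ j : Fin k,
                ∑' n : ℕ, (c i * x i ^ n) * (c j * x j ^ n) := by
              refine Finset.sum_congr rfl fun i _ => Finset.sum_congr rfl fun j _ => ?_
              rw [hMij i j]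
              have he : (fun n : ℕ => (c i * x i ^ n) * (c j * x j ^ n))
                  = fun n : ℕ => c i * (c j * (x i * x j) ^ n) := by
                funext n; rw [mul_pow]; ring
              rw [he, tsum_mul_left, tsum_mul_left]
              ring
          _ = ∑ i : Fin k, ∑' n : ℕ, ∑ j : Fin k, (c i * x i ^ n) * (c j * x j ^ n) := by
              refine Finset.sum_congr rfl fun i _ => ?_
              rw [Summable.tsum_finsetSum fun j _ => hterm i j]
          _ = ∑' n : ℕ, ∑ i : Fin k, ∑ j : Fin k, (c i * x i ^ n) * (c j * x j ^ n) := by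
              rw [Summable.tsum_finsetSum fun i _ => hs1 i]
          _ = ∑' n : ℕ, (∑ i : Fin k, c i * x i ^ n) ^ 2 := by
              congr 1; funext n
              rw [sq, Finset.sum_mul_sum]
      rw [hquad]
      -- summability of the squares
      have hg : Summable (fun n : ℕ => (∑ i : Fin k, c i * x i ^ n) ^ 2) := by
        have : (fun n : ℕ => (∑ i : Fin k, c i * x i ^ n) ^ 2)
            = fun n : ℕ => ∑ i : Fin k, ∑ j : Fin k,
                (c i * c j) * (x i * x j) ^ n := by
          funext n
          rw [sq, Finset.sum_mul_sum]
          refine Finset.sum_congr rfl fun i _ => Finset.sum_congr rfl fun j _ => ?_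
          rw [mul_pow]; ring
        rw [this]
        exact summable_sum fun i _ => summable_sum fun j _ => (hsummable i j).mul_left _
      -- find n with nonzero partial sum, via Vandermonde
      have hxinj : Function.Injective x := by
        intro i j h
        apply hdist
        have : (x i)⁻¹ = (x j)⁻¹ := by rw [h]
        simpa [hxdef, inv_inv] using this
      have hdet : (Matrix.vandermonde x).det ≠ 0 := by
        rw [Matrix.det_vandermonde]
        refine Finset.prod_ne_zero_iff.mpr fun i _ => Finset.prod_ne_zero_iff.mpr fun j hj => ?_
        exact sub_ne_zero.mpr fun h => (Finset.mem_Ioi.mp hj).ne' (hxinj h)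
      have hexists : ∃ n : Fin k, (∑ i : Fin k, c i * x i ^ (n : ℕ)) ≠ 0 := by
        by_contra hall
        push_neg at hall
        apply hc
        have hzero : c ᵥ* Matrix.vandermonde x = 0 := by
          funext n
          simpa [Matrix.vecMul, dotProduct, Matrix.vandermonde] using hall n
        have : c ᵥ* (Matrix.vandermonde x * (Matrix.vandermonde x)⁻¹) = 0 := by
          rw [← Matrix.vecMul_vecMul, hzero, Matrix.zero_vecMul]
        rwa [Matrix.mul_nonsing_inv _ (isUnit_iff_ne_zero.mpr hdet), Matrix.vecMul_one] at this
      obtain ⟨n, hn⟩ := hexists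
      have hpos : 0 < (∑ i : Fin k, c i * x i ^ (n : ℕ)) ^ 2 := by positivity
      exact Summable.tsum_pos hg (fun m => sq_nonneg _) (n : ℕ) hpos
  refine ⟨⟨M, hMsol, huniq⟩, fun N hN => ?_⟩
  rw [huniq N hN]
  exact hMpd
end

section
/- Let A = diag(a₁, …, a_k) be an invertible diagonal matrix, let 𝟙 ∈ ℝ^k be the all-ones column vector, let a = (a₁⁻¹, …, a_k⁻¹)ᵀ, and let M ∈ ℝ^{k×k} satisfy M = A⁻¹MA⁻ᵀ + 𝟙𝟙ᵀ. Then for every real β and every diagonal matrix D ∈ ℝ^{k×k}, the matrix J̃ = D((1 − β)M − 𝟙𝟙ᵀ)D satisfies the Lyapunov equation J̃ = A⁻¹J̃A⁻ᵀ + D(aaᵀ − β𝟙𝟙ᵀ)D. -/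
/-!
Write `P = A⁻¹` and `L X = X - P X Pᵀ`. The hypothesis says `L M = 𝟙𝟙ᵀ`, and `L 𝟙𝟙ᵀ = 𝟙𝟙ᵀ - aaᵀ`
because `P𝟙 = a`, so by linearity `L((1 - β)M - 𝟙𝟙ᵀ) = aaᵀ - β𝟙𝟙ᵀ`. Since `P` and `D` are both
diagonal, `L` commutes with the congruence `X ↦ DXD`, which gives the equation for `J̃`.
-/

open Matrix

/-- The column vector `a = (a₁⁻¹, …, a_k⁻¹)ᵀ`. -/
noncomputable def invCol {k : ℕ} (a : Fin k → ℝ) : Matrix (Fin k) (Fin 1) ℝ :=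
  Matrix.of fun j _ => (a j)⁻¹

namespace Matrix

variable {n m R : Type*} [Fintype n] [Fintype m] [CommRing R]

theorem sub_eq_mul_sub_mul_transpose_add_of_eq_mul_mul_transpose_add
    (P M : Matrix n n R) (u : Matrix n m R) (hM : M = P * M * Pᵀ + u * uᵀ) (β : R) :
    (1 - β) • M - u * uᵀ
      = P * ((1 - β) • M - u * uᵀ) * Pᵀ + ((P * u) * (P * u)ᵀ - β • (u * uᵀ)) := by
  have hPMP : P * M * Pᵀ = M - u * uᵀ := eq_sub_of_add_eq hM.symm
  have hconj : P * ((1 - β) • M - u * uᵀ) * Pᵀ = (1 - β) • (P * M * Pᵀ) - (P * u) * (P * u)ᵀ := by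
    simp only [Matrix.mul_sub, Matrix.sub_mul, Matrix.mul_smul, Matrix.smul_mul, transpose_mul,
      Matrix.mul_assoc]
  rw [hconj, hPMP]
  module

variable [DecidableEq n]

theorem diagonal_mul_diagonal_conj_mul_diagonal_transpose (p d : n → R) (X : Matrix n n R) :
    diagonal p * (diagonal d * X * diagonal d) * (diagonal p)ᵀ
      = diagonal d * (diagonal p * X * (diagonal p)ᵀ) * diagonal d := by
  ext i j
  simp only [diagonal_transpose, diagonal_mul, mul_diagonal]
  ring

end Matrix

theorem inv_diagonal_of_ne_zero {k : ℕ} {a : Fin k → ℝ} (ha : ∀ j, a j ≠ 0) :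
    (diagonal a)⁻¹ = diagonal a⁻¹ := by
  refine inv_eq_right_inv ?_
  rw [diagonal_mul_diagonal, ← diagonal_one]
  exact congrArg diagonal (funext fun j => mul_inv_cancel₀ (ha j))

theorem diagonal_inv_mul_onesCol {k : ℕ} (a : Fin k → ℝ) :
    diagonal a⁻¹ * onesCol k = invCol a := by
  ext j
  simp [onesCol, invCol, diagonal_mul]

/-- If `A = diag a` is invertible and `M = A⁻¹MA⁻ᵀ + 𝟙𝟙ᵀ`, then for every `β ∈ ℝ` and
every diagonal `D = diag d`, the matrix `J̃ = D((1−β)M − 𝟙𝟙ᵀ)D` satisfies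
`J̃ = A⁻¹ J̃ A⁻ᵀ + D(aaᵀ − β 𝟙𝟙ᵀ)D` where `a = (a₁⁻¹, …, a_k⁻¹)ᵀ`. -/
theorem stmt8 {k : ℕ} (a : Fin k → ℝ) (ha : ∀ j, a j ≠ 0)
    (M : Matrix (Fin k) (Fin k) ℝ)
    (hM : M = (diagonal a)⁻¹ * M * ((diagonal a)⁻¹)ᵀ + onesCol k * (onesCol k)ᵀ)
    (β : ℝ) (d : Fin k → ℝ) :
    diagonal d * ((1 - β) • M - onesCol k * (onesCol k)ᵀ) * diagonal d
      = (diagonal a)⁻¹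
          * (diagonal d * ((1 - β) • M - onesCol k * (onesCol k)ᵀ) * diagonal d)
          * ((diagonal a)⁻¹)ᵀ
        + diagonal d * (invCol a * (invCol a)ᵀ - β • (onesCol k * (onesCol k)ᵀ))
          * diagonal d := by
  rw [inv_diagonal_of_ne_zero ha] at hM ⊢
  rw [diagonal_mul_diagonal_conj_mul_diagonal_transpose, ← Matrix.add_mul, ← Matrix.mul_add,
    ← diagonal_inv_mul_onesCol,
    ← sub_eq_mul_sub_mul_transpose_add_of_eq_mul_mul_transpose_add _ _ _ hM]
end

section
/- Let A = diag(a₁, …, a_k) with |a_j| > 1 for all j and pairwise distinct diagonal entries, let 𝟙 ∈ ℝ^k be the all-ones column vector, and let M be the unique (symmetric positive definite) solution of M = A⁻¹MA⁻ᵀ + 𝟙𝟙ᵀ. Then 𝟙ᵀM⁻¹𝟙 = 1 − (∏_{j=1}^{k} a_j)⁻². -/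
open Matrix Polynomial

private lemma natDegree_lt_of_coeff_eq_zero {p : Polynomial ℝ} {n : ℕ} (hn : 0 < n)
    (hle : p.natDegree ≤ n) (hc : p.coeff n = 0) : p.natDegree < n := by
  rcases lt_or_eq_of_le hle with h | h
  · exact h
  · by_cases hp : p = 0
    · simpa [hp] using hn
    · have : p.leadingCoeff = 0 := by rw [Polynomial.leadingCoeff, h]; exact hc
      exact absurd this (Polynomial.leadingCoeff_ne_zero.mpr hp)

private lemma lin_natDegree_le (c : ℝ) : (1 - C c * X).natDegree ≤ 1 := by
  apply le_trans (Polynomial.natDegree_sub_le _ _)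
  simp only [max_le_iff]
  exact ⟨by simp, (Polynomial.natDegree_C_mul_le _ _).trans (by simp)⟩

private lemma lin_natDegree_le' (c : ℝ) : (C c - X : ℝ[X]).natDegree ≤ 1 := by
  apply le_trans (Polynomial.natDegree_sub_le _ _)
  simp

private lemma prod_lin_natDegree_le {k : ℕ} (x : Fin k → ℝ) (s : Finset (Fin k)) :
    (∏ l ∈ s, (1 - C (x l) * X)).natDegree ≤ s.card := by
  refine le_trans (Polynomial.natDegree_prod_le s (fun l => 1 - C (x l) * X)) ?_
  have : ∑ l ∈ s, (1 - C (x l) * X).natDegree ≤ ∑ l ∈ s, 1 :=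
    Finset.sum_le_sum fun l _ => lin_natDegree_le (x l)
  simpa using this

private lemma poly_eq_zero_of_eval {k : ℕ} {x : Fin k → ℝ} (hxinj : Function.Injective x)
    (p : ℝ[X]) (hdeg : p.natDegree < k) (h : ∀ i, p.eval (x i) = 0) : p = 0 :=
  Polynomial.eq_zero_of_natDegree_lt_card_of_eval_eq_zero p hxinj h (by simpa using hdeg)

private lemma v_eq_zero {k : ℕ} {x : Fin k → ℝ} (hx0 : ∀ j, x j ≠ 0)
    (hxinj : Function.Injective x) (v : Fin k → ℝ)
    (hv : ∀ i, ∑ j, v j * ∏ l ∈ Finset.univ.erase j, (1 - x l * x i) = 0) : v = 0 := by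
  rcases Nat.eq_zero_or_pos k with hk | hk
  · subst hk; funext j; exact j.elim0
  set p : ℝ[X] := ∑ j, C (v j) * ∏ l ∈ Finset.univ.erase j, (1 - C (x l) * X) with hp
  have hdeg : p.natDegree < k := by
    have : p.natDegree ≤ k - 1 := by
      apply Polynomial.natDegree_sum_le_of_forall_le
      intro j _
      refine le_trans (Polynomial.natDegree_C_mul_le _ _) ?_
      simpa using prod_lin_natDegree_le x (Finset.univ.erase j)
    omega
  have hev : ∀ i, p.eval (x i) = 0 := by
    intro i
    rw [hp]
    simpa [Polynomial.eval_finset_sum, Polynomial.eval_prod] using hv i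
  have hp0 : p = 0 := poly_eq_zero_of_eval hxinj p hdeg hev
  funext j
  have h1 : p.eval (x j)⁻¹ = 0 := by rw [hp0]; simp
  rw [hp, Polynomial.eval_finset_sum] at h1
  have h2 : ∀ m ∈ Finset.univ, m ≠ j →
      (C (v m) * ∏ l ∈ Finset.univ.erase m, (1 - C (x l) * X)).eval (x j)⁻¹ = 0 := by
    intro m _ hm
    simp only [Polynomial.eval_mul, Polynomial.eval_C, Polynomial.eval_prod]
    apply mul_eq_zero_of_right
    apply Finset.prod_eq_zero (Finset.mem_erase.mpr ⟨Ne.symm hm, Finset.mem_univ j⟩)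
    simp [mul_inv_cancel₀ (hx0 j)]
  rw [Finset.sum_eq_single j (fun m hms hm => h2 m hms hm) (by simp)] at h1
  simp only [Polynomial.eval_mul, Polynomial.eval_C, Polynomial.eval_prod] at h1
  rcases mul_eq_zero.mp h1 with h | h
  · exact h
  · exfalso
    obtain ⟨l, hl, hl0⟩ := Finset.prod_eq_zero_iff.mp h
    simp only [Polynomial.eval_sub, Polynomial.eval_one, Polynomial.eval_mul,
      Polynomial.eval_C, Polynomial.eval_X, sub_eq_zero] at hl0
    have : x l = x j := by
      field_simp [hx0 j] at hl0
      linarith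
    exact (Finset.mem_erase.mp hl).1 (hxinj this)

private lemma sum_w {k : ℕ} {x : Fin k → ℝ} (hxinj : Function.Injective x)
    (w : Fin k → ℝ)
    (hw : ∀ i, ∑ j, w j * ∏ l ∈ Finset.univ.erase j, (1 - x l * x i)
        = ∏ l, (1 - x l * x i)) :
    ∑ j, w j = 1 - (∏ j, x j) * ∏ j, x j := by
  rcases Nat.eq_zero_or_pos k with hk | hk
  · subst hk; simp
  set P : ℝ[X] := (∏ l, (1 - C (x l) * X)) - C (∏ l, x l) * ∏ l, (C (x l) - X) with hP
  set q : ℝ[X] := (∑ j, C (w j) * ∏ l ∈ Finset.univ.erase j, (1 - C (x l) * X)) - P with hq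
  have hPdeg : P.natDegree < k := by
    apply natDegree_lt_of_coeff_eq_zero hk
    · refine le_trans (Polynomial.natDegree_sub_le _ _) (max_le ?_ ?_)
      · simpa using prod_lin_natDegree_le x Finset.univ
      · refine le_trans (Polynomial.natDegree_C_mul_le _ _) ?_
        refine le_trans (Polynomial.natDegree_prod_le Finset.univ
          (fun l => (C (x l) - X : ℝ[X]))) ?_
        have : ∑ l : Fin k, (C (x l) - X : ℝ[X]).natDegree ≤ ∑ _l : Fin k, 1 :=
          Finset.sum_le_sum fun l _ => lin_natDegree_le' (x l)
        simpa using this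
    · have e1 : ∀ c : ℝ, ((1 : ℝ[X]) - C c * X).coeff 1 = -c := by
        intro c; simp [Polynomial.coeff_one]
      have e2 : ∀ c : ℝ, ((C c - X : ℝ[X])).coeff 1 = -1 := by
        intro c; simp [Polynomial.coeff_C]
      have c1 : (∏ l, (1 - C (x l) * X)).coeff k = ∏ l, (-(x l)) := by
        have := Polynomial.coeff_prod_of_natDegree_le (s := Finset.univ)
          (fun l => (1 - C (x l) * X : ℝ[X])) 1 (fun l _ => lin_natDegree_le (x l))
        simpa [e1] using this
      have c2 : (∏ l, (C (x l) - X : ℝ[X])).coeff k = ∏ _l : Fin k, (-1 : ℝ) := by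
        have := Polynomial.coeff_prod_of_natDegree_le (s := Finset.univ)
          (fun l => (C (x l) - X : ℝ[X])) 1 (fun l _ => lin_natDegree_le' (x l))
        simpa [e2] using this
      rw [hP, Polynomial.coeff_sub, Polynomial.coeff_C_mul, c1, c2]
      have : ∏ l, (-(x l)) = (∏ _l : Fin k, (-1 : ℝ)) * ∏ l, x l := by
        rw [← Finset.prod_mul_distrib]; simp
      rw [this]; ring
  have hqdeg : q.natDegree < k := by
    refine lt_of_le_of_lt (Polynomial.natDegree_sub_le _ _) (max_lt ?_ hPdeg)
    have : (∑ j, C (w j) * ∏ l ∈ Finset.univ.erase j, (1 - C (x l) * X)).natDegree ≤ k - 1 := by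
      apply Polynomial.natDegree_sum_le_of_forall_le
      intro j _
      refine le_trans (Polynomial.natDegree_C_mul_le _ _) ?_
      simpa using prod_lin_natDegree_le x (Finset.univ.erase j)
    omega
  have hev : ∀ i, q.eval (x i) = 0 := by
    intro i
    have hz : ∏ l, (x l - x i) = 0 :=
      Finset.prod_eq_zero (Finset.mem_univ i) (by ring)
    rw [hq, hP]
    simp only [Polynomial.eval_sub, Polynomial.eval_finset_sum, Polynomial.eval_mul,
      Polynomial.eval_C, Polynomial.eval_prod, Polynomial.eval_one, Polynomial.eval_X]
    have := hw i
    rw [show (∏ l, (x l - x i)) = 0 from hz]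
    simp only [mul_zero, sub_zero]
    rw [← this]
    ring
  have hq0 : q = 0 := poly_eq_zero_of_eval hxinj q hqdeg hev
  have h0 : q.eval 0 = 0 := by rw [hq0]; simp
  rw [hq, hP] at h0
  simp only [Polynomial.eval_sub, Polynomial.eval_finset_sum, Polynomial.eval_mul,
    Polynomial.eval_C, Polynomial.eval_prod, Polynomial.eval_one, Polynomial.eval_X,
    mul_zero, sub_zero, Finset.prod_const_one, mul_one] at h0
  linarith [h0]

/-- For `A = diag a` with `|aⱼ| > 1` and distinct entries, if `M` solves the Lyapunov
equation `M = A⁻¹MA⁻ᵀ + 𝟙𝟙ᵀ`, then `𝟙ᵀM⁻¹𝟙 = 1 − (∏ aⱼ)⁻²`. -/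
theorem stmt9 {k : ℕ} (a : Fin k → ℝ) (ha : ∀ j, 1 < |a j|)
    (hdist : Function.Injective a) (M : Matrix (Fin k) (Fin k) ℝ)
    (hM : M = (diagonal a)⁻¹ * M * ((diagonal a)⁻¹)ᵀ + onesCol k * (onesCol k)ᵀ) :
    ((onesCol k)ᵀ * M⁻¹ * onesCol k) 0 0 = 1 - ((∏ j, a j) ^ 2)⁻¹ := by
  rcases Nat.eq_zero_or_pos k with hk | hk
  · subst hk
    simp [Matrix.mul_apply, onesCol]
  set x : Fin k → ℝ := fun j => (a j)⁻¹ with hxdef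
  have ha0 : ∀ j, a j ≠ 0 := by
    intro j h
    have := ha j
    rw [h] at this
    simp at this
    linarith
  have hx0 : ∀ j, x j ≠ 0 := fun j => inv_ne_zero (ha0 j)
  have hxlt : ∀ j, |x j| < 1 := by
    intro j
    rw [hxdef]
    simp only [abs_inv]
    rw [inv_lt_one_iff₀]
    right; exact ha j
  have hxinj : Function.Injective x := by
    intro i j h
    apply hdist
    have : ((a i)⁻¹)⁻¹ = ((a j)⁻¹)⁻¹ := by rw [hxdef] at h; simp only at h; rw [h]
    rwa [inv_inv, inv_inv] at this
  have hone : ∀ i j, (1 : ℝ) - x i * x j ≠ 0 := by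
    intro i j h
    have h1 : |x i * x j| < 1 := by
      rw [abs_mul]
      
      calc |x i| * |x j| ≤ |x i| * 1 := by
            exact mul_le_mul_of_nonneg_left (le_of_lt (hxlt j)) (abs_nonneg _)
        _ = |x i| := mul_one _
        _ < 1 := hxlt i
    have hx1 : x i * x j = 1 := by linarith
    rw [hx1] at h1
    simp at h1
  have hA : (diagonal a)⁻¹ = diagonal x := by
    apply Matrix.inv_eq_right_inv
    have he : (fun i => a i * x i) = fun _ => (1 : ℝ) :=
      funext fun j => mul_inv_cancel₀ (ha0 j)
    rw [Matrix.diagonal_mul_diagonal, he, Matrix.diagonal_one]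
  have hMentry : ∀ i j, M i j = (1 - x i * x j)⁻¹ := by
    intro i j
    have h := congrFun (congrFun hM i) j
    rw [hA, Matrix.diagonal_transpose] at h
    rw [Matrix.add_apply, Matrix.mul_diagonal, Matrix.diagonal_mul] at h
    simp only [Matrix.mul_apply, onesCol, Matrix.transpose_apply, Matrix.of_apply,
      mul_one, Finset.sum_const, Finset.card_univ, Fintype.card_fin, one_smul,
      nsmul_eq_mul, Nat.cast_one, one_mul] at h
    have hmul : M i j * (1 - x i * x j) = 1 := by linear_combination h
    exact eq_inv_of_mul_eq_one_left hmul
  -- row-clearing identity: multiplying row i of `M ⬝ v` by `∏ l (1 - x l * x i)`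
  have hrow : ∀ (v : Fin k → ℝ) (i : Fin k),
      ∑ j, v j * ∏ l ∈ Finset.univ.erase j, (1 - x l * x i)
        = (∏ l, (1 - x l * x i)) * ∑ j, M i j * v j := by
    intro v i
    rw [Finset.mul_sum]
    apply Finset.sum_congr rfl
    intro j _
    rw [hMentry i j,
      ← Finset.mul_prod_erase Finset.univ (fun l => 1 - x l * x i) (Finset.mem_univ j)]
    have hne : (1 : ℝ) - x i * x j ≠ 0 := hone i j
    field_simp
    congr 1
    exact Finset.prod_congr rfl fun l _ => by ring
  have hdet : M.det ≠ 0 := by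
    intro hd
    obtain ⟨v, hv0, hv⟩ := Matrix.exists_mulVec_eq_zero_iff.mpr hd
    apply hv0
    apply v_eq_zero hx0 hxinj
    intro i
    rw [hrow v i]
    have h1 : ∑ j, M i j * v j = 0 := by
      have := congrFun hv i
      simpa [Matrix.mulVec, dotProduct] using this
    rw [h1, mul_zero]
  have hMunit : IsUnit M.det := isUnit_iff_ne_zero.mpr hdet
  set w : Fin k → ℝ := M⁻¹.mulVec (fun _ => 1) with hwdef
  have hw : M.mulVec w = fun _ => 1 := by
    rw [hwdef, Matrix.mulVec_mulVec, Matrix.mul_nonsing_inv M hMunit, Matrix.one_mulVec]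
  have hwrow : ∀ i, ∑ j, w j * ∏ l ∈ Finset.univ.erase j, (1 - x l * x i)
      = ∏ l, (1 - x l * x i) := by
    intro i
    rw [hrow w i]
    have h1 : ∑ j, M i j * w j = 1 := by
      have := congrFun hw i
      simpa [Matrix.mulVec, dotProduct] using this
    rw [h1, mul_one]
  have hsum := sum_w hxinj w hwrow
  have hL : ((onesCol k)ᵀ * M⁻¹ * onesCol k) 0 0 = ∑ j, w j := by
    simp only [Matrix.mul_apply, onesCol, Matrix.transpose_apply, Matrix.of_apply,
      one_mul, mul_one, hwdef, Matrix.mulVec, dotProduct]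
    rw [Finset.sum_comm]
  rw [hL, hsum]
  have hprod : (∏ j, x j) = (∏ j, a j)⁻¹ := by
    rw [hxdef, ← Finset.prod_inv_distrib]
  rw [hprod]
  rw [sq]
  rw [mul_inv]
end

section
/- Let M ∈ ℝ^{k×k} be symmetric positive definite, let 𝟙 ∈ ℝ^k be the all-ones column vector, and let c be a real number. Then cM − 𝟙𝟙ᵀ is positive definite if and only if c > 𝟙ᵀM⁻¹𝟙. -/
open Matrix

/-- For a symmetric positive definite `M ∈ ℝ^{k×k}` (`k ≥ 1`) and `c ∈ ℝ`, the matrix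
`cM − 𝟙𝟙ᵀ` is positive definite iff `c > 𝟙ᵀM⁻¹𝟙`. -/
theorem stmt10 {k : ℕ} (hk : 0 < k) (M : Matrix (Fin k) (Fin k) ℝ) (hM : M.PosDef)
    (c : ℝ) :
    (c • M - onesCol k * (onesCol k)ᵀ).PosDef ↔
      ((onesCol k)ᵀ * M⁻¹ * onesCol k) 0 0 < c := by
  classical
  set u : Fin k → ℝ := fun _ => 1 with hu
  have hu0 : u ≠ 0 := by
    intro h
    have : u ⟨0, hk⟩ = 0 := by rw [h]; rfl
    simp [hu] at this
  set w : Fin k → ℝ := M⁻¹ *ᵥ u with hw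
  have hMw : M *ᵥ w = u := by
    rw [hw, mulVec_mulVec, mul_nonsing_inv _ (isUnit_iff_ne_zero.mpr hM.det_pos.ne'), one_mulVec]
  have hw0 : w ≠ 0 := by
    intro h
    apply hu0
    rw [← hMw, h, mulVec_zero]
  set s : ℝ := u ⬝ᵥ w with hs
  -- the matrix entry equals s
  have hentry : ((onesCol k)ᵀ * M⁻¹ * onesCol k) 0 0 = s := by
    simp [onesCol, mul_apply, dotProduct, mulVec, hs, hw, hu, Finset.mul_sum]
    exact Finset.sum_comm
  have hsformula : w ⬝ᵥ M *ᵥ w = s := by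
    rw [hMw, hs, dotProduct_comm]
  have hspos : 0 < s := by
    have := hM.dotProduct_mulVec_pos hw0
    simpa [hsformula] using this
  -- quadratic form of the matrix
  have hquad : ∀ x : Fin k → ℝ,
      x ⬝ᵥ (c • M - onesCol k * (onesCol k)ᵀ) *ᵥ x
        = c * (x ⬝ᵥ M *ᵥ x) - (u ⬝ᵥ x) ^ 2 := by
    intro x
    have h1 : (onesCol k * (onesCol k)ᵀ) *ᵥ x = fun _ => u ⬝ᵥ x := by
      funext i
      simp [onesCol, mulVec, mul_apply, dotProduct, hu, Finset.sum_mul]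
    rw [sub_mulVec, dotProduct_sub, smul_mulVec, dotProduct_smul, h1]
    have h2 : (x ⬝ᵥ fun _ => u ⬝ᵥ x) = (u ⬝ᵥ x) ^ 2 := by
      simp [dotProduct, hu, Finset.sum_mul, sq, Finset.mul_sum, mul_comm]
    rw [h2]
    simp [smul_eq_mul]
  have hsymm : ∀ x : Fin k → ℝ, w ⬝ᵥ M *ᵥ x = u ⬝ᵥ x := by
    intro x
    rw [dotProduct_mulVec, ← mulVec_transpose]
    have : Mᵀ = M := hM.isHermitian
    rw [this, hMw]
  have hherm : (c • M - onesCol k * (onesCol k)ᵀ).IsHermitian := by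
    have h1 : (onesCol k * (onesCol k)ᵀ)ᴴ = onesCol k * (onesCol k)ᵀ := by
      ext i j
      simp [onesCol, conjTranspose_apply, mul_apply]
    show _ᴴ = _
    rw [conjTranspose_sub, h1, conjTranspose_smul, hM.1.eq]
    simp
  constructor
  · intro hPD
    have := hPD.dotProduct_mulVec_pos hw0
    rw [show star w = w from rfl, hquad w, hsformula, hs] at this
    -- 0 < c * s - s^2
    nlinarith [hspos]
  · intro hc
    rw [hentry] at hc
    refine Matrix.PosDef.of_dotProduct_mulVec_pos hherm (fun x hx => ?_)
    rw [show star x = x from rfl, hquad x]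
    set q : ℝ := x ⬝ᵥ M *ᵥ x with hq
    set t : ℝ := u ⬝ᵥ x with ht
    have hqpos : 0 < q := by
      have := hM.dotProduct_mulVec_pos hx
      simpa [hq] using this
    -- Cauchy-Schwarz via y = x - (t/s) • w
    have hy : 0 ≤ (x - (t/s) • w) ⬝ᵥ M *ᵥ (x - (t/s) • w) := by
      have := hM.posSemidef.dotProduct_mulVec_nonneg (x - (t/s) • w)
      simpa using this
    have hwx : w ⬝ᵥ M *ᵥ x = t := hsymm x
    have hxw : x ⬝ᵥ M *ᵥ w = t := by rw [hMw, ht, dotProduct_comm]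
    simp only [sub_dotProduct, dotProduct_sub, mulVec_sub, mulVec_smul,
      dotProduct_smul, smul_dotProduct, smul_eq_mul, hwx, hxw, hsformula, ← hq] at hy
    have hCS : t ^ 2 ≤ s * q := by
      have hs' : s ≠ 0 := ne_of_gt hspos
      field_simp at hy
      have h3 : (q * s - t * t) / s * s = q * s - t * t := div_mul_cancel₀ _ hs'
      nlinarith [hy, h3]
    nlinarith [hqpos]
end

section
/- Let a be a real number with a² > 1, let q > 0, let H = diag(h₁, …, hₙ) be a real diagonal matrix, and let p > 0. Then the following are equivalent: (i) there exist a real P > 0, a column vector Γ ∈ ℝⁿ, and a positive semidefinite Π ∈ ℝ^{n×n} with Tr(Π) ≤ p such that P = a²P + q − a²ΓᵀHᵀ(I + HΠHᵀ)⁻¹HΓ and ΓΓᵀ ⪯ P·Π; (ii) a² < 1 + (maxᵢ hᵢ²)·p. -/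
open Matrix

section Stmt11Aux

variable {n : ℕ}

private lemma quad_entry (A : Matrix (Fin n) (Fin n) ℝ) (X Y : Matrix (Fin n) (Fin 1) ℝ) :
    (Xᵀ * A * Y) 0 0 = (fun i => X i 0) ⬝ᵥ (A *ᵥ fun i => Y i 0) := by
  simp only [Matrix.mul_apply, Matrix.mulVec, dotProduct, Matrix.transpose_apply,
    Finset.sum_mul, Finset.mul_sum]
  rw [Finset.sum_comm]
  exact Finset.sum_congr rfl fun i _ => Finset.sum_congr rfl fun j _ => by ring

private lemma rank_one_quad (Γ : Matrix (Fin n) (Fin 1) ℝ) (w : Fin n → ℝ) :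
    w ⬝ᵥ ((Γ * Γᵀ) *ᵥ w) = ((fun i => Γ i 0) ⬝ᵥ w) ^ 2 := by
  simp only [Matrix.mulVec, dotProduct, Matrix.mul_apply, Matrix.transpose_apply,
    Fin.sum_univ_one, pow_two, Finset.sum_mul_sum, Finset.mul_sum, Finset.sum_mul]
  exact Finset.sum_congr rfl fun i _ => Finset.sum_congr rfl fun j _ => by ring

/-- `uᵀ N u ≤ tr(N) * uᵀu` for `N` PSD. -/
private lemma quad_le_trace_mul {N : Matrix (Fin n) (Fin n) ℝ} (hN : N.PosSemidef)
    (u : Fin n → ℝ) : u ⬝ᵥ (N *ᵥ u) ≤ N.trace * (u ⬝ᵥ u) := by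
  obtain ⟨B, hB⟩ : ∃ B : Matrix (Fin n) (Fin n) ℝ, N = Bᴴ * B := by
    open scoped MatrixOrder in
    obtain ⟨B, hB⟩ := CStarAlgebra.nonneg_iff_eq_star_mul_self.mp hN.nonneg
    exact ⟨B, hB⟩
  have h1 : u ⬝ᵥ (N *ᵥ u) = (B *ᵥ u) ⬝ᵥ (B *ᵥ u) := by
    rw [hB, ← Matrix.mulVec_mulVec, Matrix.dotProduct_mulVec]
    have : u ᵥ* Bᴴ = B *ᵥ u := by
      rw [show (Bᴴ : Matrix (Fin n) (Fin n) ℝ) = Bᵀ from rfl, Matrix.vecMul_transpose]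
    rw [this]
  have h2 : N.trace = ∑ j, ∑ i, B i j ^ 2 := by
    rw [hB]
    simp only [Matrix.trace, Matrix.diag, Matrix.mul_apply, Matrix.conjTranspose_apply,
      star_trivial, pow_two]
  rw [h1, h2]
  have h3 : (B *ᵥ u) ⬝ᵥ (B *ᵥ u) = ∑ i, (∑ j, B i j * u j) ^ 2 := by
    simp only [dotProduct, Matrix.mulVec, dotProduct, pow_two]
  rw [h3]
  calc ∑ i, (∑ j, B i j * u j) ^ 2
      ≤ ∑ i, (∑ j, B i j ^ 2) * (∑ j, u j ^ 2) :=
        Finset.sum_le_sum fun i _ => Finset.sum_mul_sq_le_sq_mul_sq _ _ _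
    _ = (∑ j, ∑ i, B i j ^ 2) * (u ⬝ᵥ u) := by
        rw [← Finset.sum_mul, Finset.sum_comm]
        congr 1
        simp [dotProduct, pow_two]

private lemma arith1 {P s α β t : ℝ} (hP : 0 < P) (hα : 0 ≤ α) (hβ : 0 ≤ β)
    (hsplit : s = α + β) (hquad : 0 ≤ P * β - s ^ 2) (hβt : β ≤ t * α) (ht0 : 0 ≤ t) :
    s * (1 + t) ≤ P * t := by
  have hs0 : 0 ≤ s := by rw [hsplit]; linarith
  have hβs : β * (1 + t) ≤ t * s := by nlinarith
  rcases eq_or_lt_of_le hs0 with hseq | hspos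
  · rw [← hseq, zero_mul]; positivity
  · have h2 : (s * (1 + t)) * s ≤ (P * t) * s := by nlinarith
    exact le_of_mul_le_mul_right h2 hspos

private lemma arith2 {P s t c : ℝ} (hP : 0 < P) (hs0 : 0 ≤ s) (ht0 : 0 ≤ t)
    (htc : t ≤ c) (hst : s * (1 + t) ≤ P * t) : s * (1 + c) ≤ P * c := by
  have hsP : s ≤ P := by nlinarith
  nlinarith [mul_le_mul_of_nonneg_right hsP (by linarith : (0:ℝ) ≤ c - t)]

private lemma arith3 {a q P s c : ℝ} (ha : 1 < a ^ 2) (hq : 0 < q) (hP : 0 < P)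
    (hc0 : 0 ≤ c) (hsd : a ^ 2 * s = (a ^ 2 - 1) * P + q) (hsc : s * (1 + c) ≤ P * c) :
    a ^ 2 < 1 + c := by
  have hc1 : (0:ℝ) < 1 + c := by linarith
  have h5 : ((a ^ 2 - 1) * P + q) * (1 + c) ≤ a ^ 2 * (P * c) := by
    calc ((a ^ 2 - 1) * P + q) * (1 + c) = a ^ 2 * (s * (1 + c)) := by rw [← hsd]; ring
      _ ≤ a ^ 2 * (P * c) := mul_le_mul_of_nonneg_left hsc (by positivity)
  nlinarith [mul_pos hP hc1]

end Stmt11Aux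

/-- Scalar-source case: for a scalar source with gain `a` (`a² > 1`), noise variance
`q > 0`, diagonal channel `H = diag h`, and power budget `p > 0`, a power-feasible
stabilizing solution of the scalar DARE exists iff `a² < 1 + (maxᵢ hᵢ²)·p`. -/
theorem stmt11 {n : ℕ} (a q p : ℝ) (ha : 1 < a ^ 2) (hq : 0 < q) (hp : 0 < p)
    (h : Fin n → ℝ) :
    (∃ (P : ℝ) (Γ : Matrix (Fin n) (Fin 1) ℝ) (V : Matrix (Fin n) (Fin n) ℝ),
      0 < P ∧ V.PosSemidef ∧ V.trace ≤ p ∧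
      P = a ^ 2 * P + q
        - a ^ 2 * ((Γᵀ * (diagonal h)ᵀ * (1 + diagonal h * V * (diagonal h)ᵀ)⁻¹
                      * diagonal h * Γ) 0 0) ∧
      (P • V - Γ * Γᵀ).PosSemidef) ↔
    a ^ 2 < 1 + (⨆ i, (h i) ^ 2) * p := by
  set S : ℝ := ⨆ i, (h i) ^ 2 with hS
  set c : ℝ := S * p with hc
  have hS0 : 0 ≤ S := by
    rcases isEmpty_or_nonempty (Fin n) with he | hne
    · simp [hS, Real.iSup_of_isEmpty]
    · obtain ⟨i⟩ := hne
      exact le_trans (sq_nonneg (h i))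
        (le_ciSup (Set.Finite.bddAbove (Set.finite_range (fun i => (h i)^2))) i)
  have hc0 : 0 ≤ c := mul_nonneg hS0 hp.le
  have hc1 : (0:ℝ) < 1 + c := by linarith
  constructor
  · rintro ⟨P, Γ, V, hP, hV, htr, hdare, hpsd⟩
    set D := diagonal h with hD
    have hDt : Dᵀ = D := diagonal_transpose h
    set N := D * V * Dᵀ with hNdef
    have hN : N.PosSemidef := by
      have := hV.mul_mul_conjTranspose_same D
      exact this
    set M := (1 : Matrix (Fin n) (Fin n) ℝ) + N with hMdef
    have hMpd : M.PosDef := Matrix.PosDef.one.add_posSemidef hN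
    have hMMinv : M * M⁻¹ = 1 :=
      Matrix.mul_nonsing_inv _ ((Matrix.isUnit_iff_isUnit_det _).1 hMpd.isUnit)
    set γv : Fin n → ℝ := fun i => Γ i 0 with hγv
    set xv : Fin n → ℝ := fun i => (D * Γ) i 0 with hxvdef
    set uv : Fin n → ℝ := M⁻¹ *ᵥ xv with huv
    set s : ℝ := xv ⬝ᵥ (M⁻¹ *ᵥ xv) with hsdef
    have hs_entry : (Γᵀ * Dᵀ * M⁻¹ * D * Γ) 0 0 = s := by
      have e1 : Γᵀ * Dᵀ * M⁻¹ * D * Γ = (D * Γ)ᵀ * M⁻¹ * (D * Γ) := by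
        rw [Matrix.transpose_mul, Matrix.mul_assoc (Γᵀ * Dᵀ * M⁻¹) D Γ]
      rw [e1, quad_entry]
    have hsdare : a ^ 2 * s = (a ^ 2 - 1) * P + q := by
      rw [hs_entry] at hdare; linarith
    set α : ℝ := uv ⬝ᵥ uv with hαdef
    set β : ℝ := uv ⬝ᵥ (N *ᵥ uv) with hβdef
    have hxu : M *ᵥ uv = xv := by
      rw [huv, Matrix.mulVec_mulVec, hMMinv, Matrix.one_mulVec]
    have hs_split : s = α + β := by
      calc s = xv ⬝ᵥ uv := rfl
        _ = uv ⬝ᵥ xv := dotProduct_comm _ _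
        _ = uv ⬝ᵥ (M *ᵥ uv) := by rw [hxu]
        _ = α + β := by
            rw [hMdef, Matrix.add_mulVec, Matrix.one_mulVec, dotProduct_add]
    have hα : 0 ≤ α := Finset.sum_nonneg fun i _ => mul_self_nonneg _
    have hβ : 0 ≤ β := by
      have := hN.dotProduct_mulVec_nonneg uv
      simpa using this
    have hs0 : 0 ≤ s := by rw [hs_split]; linarith
    set w : Fin n → ℝ := fun i => h i * uv i with hw
    have hxv : ∀ i, xv i = h i * Γ i 0 := by
      intro i
      rw [hxvdef]
      simp [hD, Matrix.diagonal_mul]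
    have hsw : s = γv ⬝ᵥ w := by
      calc s = xv ⬝ᵥ uv := rfl
        _ = γv ⬝ᵥ w := by
            apply Finset.sum_congr rfl
            intro i _
            rw [hxv i]; simp [hγv, hw]; ring
    have hDuv : D *ᵥ uv = w := by
      funext i
      rw [hD, Matrix.mulVec_diagonal]
    have hwv : w ⬝ᵥ (V *ᵥ w) = β := by
      rw [hβdef, hNdef, hDt, ← Matrix.mulVec_mulVec, ← Matrix.mulVec_mulVec, hDuv]
      apply Finset.sum_congr rfl
      intro i _
      rw [hD, Matrix.mulVec_diagonal]
      simp [hw]; ring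
    have hquad : 0 ≤ P * β - s ^ 2 := by
      have h0 := hpsd.dotProduct_mulVec_nonneg w
      rw [star_trivial, Matrix.sub_mulVec, dotProduct_sub, Matrix.smul_mulVec,
        dotProduct_smul, rank_one_quad, hwv] at h0
      rw [hsw]
      simpa using h0
    set t : ℝ := N.trace with htdef
    have hβt : β ≤ t * α := quad_le_trace_mul hN uv
    have hNdiag : ∀ i, N i i = h i ^ 2 * V i i := by
      intro i
      rw [hNdef, hDt, hD]
      rw [Matrix.mul_diagonal, Matrix.diagonal_mul]
      ring
    have hVd : ∀ i, 0 ≤ V i i := by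
      intro i
      have := hV.dotProduct_mulVec_nonneg (Pi.single i (1:ℝ))
      simpa [Matrix.mulVec_single, dotProduct, Pi.single_apply] using this
    have ht_eq : t = ∑ i, h i ^ 2 * V i i := by
      rw [htdef]
      exact Finset.sum_congr rfl fun i _ => hNdiag i
    have ht0 : 0 ≤ t := by
      rw [ht_eq]
      exact Finset.sum_nonneg fun i _ =>
        mul_nonneg (sq_nonneg _) (hVd i)
    have hhS : ∀ i, h i ^ 2 ≤ S :=
      fun i => le_ciSup (Set.Finite.bddAbove (Set.finite_range (fun i => (h i) ^ 2))) i
    have htc : t ≤ c := by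
      have h1 : t ≤ S * V.trace := by
        rw [ht_eq, Matrix.trace, Finset.mul_sum]
        exact Finset.sum_le_sum fun i _ =>
          mul_le_mul_of_nonneg_right (hhS i) (hVd i)
      calc t ≤ S * V.trace := h1
        _ ≤ S * p := mul_le_mul_of_nonneg_left htr hS0
    have hs0' : 0 ≤ s := hs0
    exact arith3 ha hq hP hc0 hsdare
      (arith2 hP hs0' ht0 htc (arith1 hP hα hβ hs_split hquad hβt ht0))
  · intro hacap
    rcases isEmpty_or_nonempty (Fin n) with he | hne
    · exfalso
      have hSz : S = 0 := by rw [hS]; exact Real.iSup_of_isEmpty _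
      rw [hc, hSz, zero_mul] at hacap
      linarith
    obtain ⟨i₀, hi₀⟩ := Finite.exists_max (fun i => (h i) ^ 2)
    have hSi : S = h i₀ ^ 2 :=
      le_antisymm (ciSup_le hi₀)
        (le_ciSup (Set.Finite.bddAbove (Set.finite_range (fun i => (h i) ^ 2))) i₀)
    have hcval : c = h i₀ ^ 2 * p := by rw [hc, hSi]
    have hca : (0:ℝ) < 1 + c - a ^ 2 := by linarith
    have hne1 : (1 + c) ≠ 0 := ne_of_gt hc1
    have hne2 : (1 + c - a ^ 2) ≠ 0 := ne_of_gt hca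
    set P : ℝ := q * (1 + c) / (1 + c - a ^ 2) with hPdef
    have hPpos : 0 < P := div_pos (mul_pos hq hc1) hca
    have hPp0 : (0:ℝ) ≤ P * p := mul_nonneg hPpos.le hp.le
    set g : Fin n → ℝ := fun i => if i = i₀ then p else 0 with hg
    have hg0 : ∀ i, 0 ≤ g i := by
      intro i; rw [hg]; dsimp only; split
      · exact hp.le
      · exact le_refl 0
    set Γ : Matrix (Fin n) (Fin 1) ℝ :=
      Matrix.of (fun i (_ : Fin 1) => if i = i₀ then Real.sqrt (P * p) else 0) with hΓ
    set m : Fin n → ℝ := fun i => 1 + h i * g i * h i with hm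
    have hm_pos : ∀ i, 0 < m i := by
      intro i
      have h1 : h i * g i * h i = g i * h i ^ 2 := by ring
      have h2 : 0 ≤ g i * h i ^ 2 := mul_nonneg (hg0 i) (sq_nonneg _)
      rw [hm]; dsimp only; rw [h1]; linarith
    have hgi₀ : g i₀ = p := by rw [hg]; simp
    have hmi : m i₀ = 1 + c := by
      rw [hm]; dsimp only; rw [hgi₀, hcval]; ring
    refine ⟨P, Γ, diagonal g, hPpos, Matrix.posSemidef_diagonal_iff.mpr hg0, ?_, ?_, ?_⟩
    · rw [Matrix.trace_diagonal]
      have hsum : ∑ i, g i = p := by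
        rw [hg, Finset.sum_ite_eq' Finset.univ i₀ (fun _ => p), if_pos (Finset.mem_univ i₀)]
      exact le_of_eq hsum
    · -- DARE
      have hMe : (1 : Matrix (Fin n) (Fin n) ℝ) + diagonal h * diagonal g * (diagonal h)ᵀ
          = diagonal m := by
        rw [diagonal_transpose, diagonal_mul_diagonal, diagonal_mul_diagonal,
          ← diagonal_one, diagonal_add]
      have hMinv : (diagonal m)⁻¹ = diagonal (fun i => (m i)⁻¹) := by
        apply Matrix.inv_eq_right_inv
        rw [diagonal_mul_diagonal, ← diagonal_one]
        exact congrArg diagonal (funext fun i => mul_inv_cancel₀ (hm_pos i).ne')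
      have hentry : (Γᵀ * (diagonal h)ᵀ * ((1 : Matrix (Fin n) (Fin n) ℝ)
            + diagonal h * diagonal g * (diagonal h)ᵀ)⁻¹ * diagonal h * Γ) 0 0
          = P * c / (1 + c) := by
        rw [hMe, hMinv, diagonal_transpose]
        rw [Matrix.mul_assoc Γᵀ (diagonal h) (diagonal fun i => (m i)⁻¹),
          diagonal_mul_diagonal,
          Matrix.mul_assoc Γᵀ (diagonal _) (diagonal h), diagonal_mul_diagonal,
          quad_entry]
        rw [dotProduct]
        simp only [Matrix.mulVec_diagonal, Pi.mul_apply]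
        rw [Finset.sum_eq_single i₀]
        · have hsq : Real.sqrt (P * p) * Real.sqrt (P * p) = P * p :=
            Real.mul_self_sqrt hPp0
          rw [hΓ]
          simp only [Matrix.of_apply, eq_self_iff_true, if_true]
          rw [hmi, hcval, div_eq_mul_inv]
          linear_combination (h i₀ * (1 + h i₀ ^ 2 * p)⁻¹ * h i₀) * hsq
        · intro b _ hb
          rw [hΓ]
          simp [Matrix.of_apply, if_neg hb]
        · intro habs
          exact absurd (Finset.mem_univ i₀) habs
      rw [hentry, hPdef]
      field_simp
      ring
    · -- PSD of P • V - Γ Γᵀ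
      have hzero : P • diagonal g - Γ * Γᵀ = 0 := by
        ext i j
        have hmulapp : (Γ * Γᵀ) i j = Γ i 0 * Γ j 0 := by
          rw [Matrix.mul_apply, Fin.sum_univ_one, Matrix.transpose_apply]
        rw [Matrix.sub_apply, hmulapp]
        simp only [Matrix.sub_apply, Matrix.smul_apply, smul_eq_mul, Matrix.zero_apply, hmulapp,
          hΓ, Matrix.of_apply]
        rcases eq_or_ne i i₀ with rfl | hi
        · rcases eq_or_ne j i with rfl | hj
          · simp [Matrix.diagonal_apply_eq, hgi₀, Real.mul_self_sqrt hPp0]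
          · rw [Matrix.diagonal_apply_ne' _ hj]
            simp [if_neg hj]
        · rcases eq_or_ne j i₀ with rfl | hj
          · rw [Matrix.diagonal_apply_ne _ hi]
            simp [if_neg hi]
          · simp [Matrix.diagonal_apply, hg, hi, hj]
      rw [hzero]
      exact Matrix.PosSemidef.zero
end

section
/- Let a be a real number with a² > 1, let Π ∈ ℝ^{n×n} be positive definite, and let H ∈ ℝ^{m×n}. Then (a²/(a² − 1)) Hᵀ(I + HΠHᵀ)⁻¹H ⪯ Π⁻¹ if and only if HΠHᵀ ⪯ (a² − 1) I. -/
open Matrix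

lemma smul_psd {k : ℕ} {r : ℝ} (hr : 0 ≤ r) {A : Matrix (Fin k) (Fin k) ℝ}
    (h : A.PosSemidef) : (r • A).PosSemidef := by
  refine ⟨?_, fun x => ?_⟩
  · unfold Matrix.IsHermitian
    rw [conjTranspose_smul, h.1.eq]
    simp
  · exact (h.smul hr).2 x

lemma smul_psd_iff {k : ℕ} {r : ℝ} (hr : 0 < r) {A : Matrix (Fin k) (Fin k) ℝ} :
    (r • A).PosSemidef ↔ A.PosSemidef := by
  refine ⟨fun h => ?_, fun h => smul_psd hr.le h⟩
  have := smul_psd (r := r⁻¹) (by positivity) h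
  rwa [smul_smul, inv_mul_cancel₀ hr.ne', one_smul] at this

lemma smul_pd {k : ℕ} {r : ℝ} (hr : 0 < r) {A : Matrix (Fin k) (Fin k) ℝ}
    (h : A.PosDef) : (r • A).PosDef := by
  refine ⟨?_, fun x hx => ?_⟩
  · unfold Matrix.IsHermitian
    rw [conjTranspose_smul, h.1.eq]
    simp
  · exact (h.smul hr).2 hx

/-- For `a² > 1`, `V ≻ 0` and any `H`:
`(a²/(a²−1)) Hᵀ(I + HVHᵀ)⁻¹H ⪯ V⁻¹` iff `HVHᵀ ⪯ (a²−1)I`. -/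
theorem stmt12 {m n : ℕ} (a : ℝ) (ha : 1 < a ^ 2)
    (V : Matrix (Fin n) (Fin n) ℝ) (hV : V.PosDef) (H : Matrix (Fin m) (Fin n) ℝ) :
    (V⁻¹ - (a ^ 2 / (a ^ 2 - 1)) • (Hᵀ * (1 + H * V * Hᵀ)⁻¹ * H)).PosSemidef ↔
      ((a ^ 2 - 1) • (1 : Matrix (Fin m) (Fin m) ℝ) - H * V * Hᵀ).PosSemidef := by
  have hc : (0:ℝ) < a ^ 2 - 1 := by linarith
  have ha0 : (0:ℝ) < a ^ 2 := by linarith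
  set b : ℝ := a ^ 2 / (a ^ 2 - 1) with hb
  have hbpos : 0 < b := div_pos ha0 hc
  have hS : (H * V * Hᵀ).PosSemidef := by
    simpa [conjTranspose_eq_transpose_of_trivial] using
      hV.posSemidef.mul_mul_conjTranspose_same H
  have hM : (1 + H * V * Hᵀ).PosDef := Matrix.PosDef.one.add_posSemidef hS
  set D : Matrix (Fin m) (Fin m) ℝ := b⁻¹ • (1 + H * V * Hᵀ) with hD
  have hDpd : D.PosDef := smul_pd (by positivity) hM
  haveI : Invertible D := hDpd.isUnit.invertible
  have hVinv : (V⁻¹).PosDef := hV.inv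
  haveI : Invertible (V⁻¹) := hVinv.isUnit.invertible
  have hDinv : D⁻¹ = b • (1 + H * V * Hᵀ)⁻¹ := by
    haveI : Invertible (b⁻¹) := invertibleOfNonzero (by positivity)
    rw [hD, Matrix.inv_smul _ b⁻¹ (hM.det_pos.ne'.isUnit), invOf_eq_inv, inv_inv]
  have hHt : (Hᵀ)ᴴ = H := by
    rw [conjTranspose_eq_transpose_of_trivial, transpose_transpose]
  have key1 : V⁻¹ - b • (Hᵀ * (1 + H * V * Hᵀ)⁻¹ * H) = V⁻¹ - Hᵀ * D⁻¹ * (Hᵀ)ᴴ := by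
    rw [hDinv, hHt, Matrix.mul_smul, Matrix.smul_mul]
  rw [key1, ← PosDef.fromBlocks₂₂ _ _ hDpd,
    PosDef.fromBlocks₁₁ _ _ hVinv, hHt,
    Matrix.nonsing_inv_nonsing_inv V (hV.det_pos.ne'.isUnit)]
  have key2 : D - H * V * Hᵀ =
      (a ^ 2)⁻¹ • ((a ^ 2 - 1) • (1 : Matrix (Fin m) (Fin m) ℝ) - H * V * Hᵀ) := by
    rw [hD, hb]
    match_scalars <;> field_simp <;> rw [sub_div, div_self ha0.ne'] <;> ring
  rw [key2, smul_psd_iff (by positivity)]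
end

section
/- Let A = diag(a₁, …, a_k) be a real diagonal matrix with |a_j| > 1 for all j, let Γ ∈ ℝ^{n×k} be a matrix whose j-th column is zero for some fixed index j, let Λ₁, …, Λₙ ≥ 0, and denote by Γᵢ the i-th row of Γ. If a symmetric matrix J̃ ∈ ℝ^{k×k} satisfies J̃ = A⁻¹J̃A⁻ᵀ + ∑_{i=1}^{n} ( −(1/(1 + Λᵢ)) ΓᵢᵀΓᵢ + A⁻¹ΓᵢᵀΓᵢA⁻ᵀ ), then the (j,j) entry of J̃ equals 0; in particular, J̃ is not positive definite. -/
open Matrix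

/-- Covering part of the converse: if the `j`-th column of the encoder `Γ` is zero, any
symmetric solution `J` of the Lyapunov equation
`J = A⁻¹JA⁻ᵀ + ∑ᵢ (−(1/(1+Λᵢ)) ΓᵢᵀΓᵢ + A⁻¹ΓᵢᵀΓᵢA⁻ᵀ)` has `J j j = 0`; in particular,
`J` is not positive definite. -/
theorem stmt14 {n k : ℕ} (a : Fin k → ℝ) (ha : ∀ j, 1 < |a j|)
    (Γ : Matrix (Fin n) (Fin k) ℝ) (j : Fin k) (hΓ : ∀ i, Γ i j = 0)
    (L : Fin n → ℝ) (hL : ∀ i, 0 ≤ L i)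
    (J : Matrix (Fin k) (Fin k) ℝ) (hsymm : J.IsSymm)
    (hJ : J = (diagonal a)⁻¹ * J * ((diagonal a)⁻¹)ᵀ
            + ∑ i, (-(1 / (1 + L i)) • vecMulVec (Γ i) (Γ i)
                    + (diagonal a)⁻¹ * vecMulVec (Γ i) (Γ i) * ((diagonal a)⁻¹)ᵀ)) :
    J j j = 0 ∧ ¬ J.PosDef := by
  have hd : (diagonal a)⁻¹ = diagonal (fun i => (a i)⁻¹) := by
    have haj : ∀ i, a i ≠ 0 := fun i => by
      have := ha i; intro h; rw [h] at this; norm_num at this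
    apply Matrix.inv_eq_left_inv
    rw [Matrix.diagonal_mul_diagonal,
      show (fun i => (a i)⁻¹ * a i) = fun _ => (1:ℝ) from
        funext fun i => inv_mul_cancel₀ (haj i), Matrix.diagonal_one]
  rw [hd] at hJ
  have hentry := congrFun (congrFun hJ j) j
  simp [Matrix.add_apply, Matrix.sum_apply, Matrix.mul_apply, Matrix.diagonal_apply,
    Matrix.vecMulVec_apply, hΓ, Matrix.transpose_apply, Matrix.neg_apply,
    Matrix.smul_apply] at hentry
  have ha2 : 1 < (a j) ^ 2 := by
    have := ha j
    nlinarith [sq_abs (a j)]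
  have haj : a j ≠ 0 := by
    intro h; rw [h] at ha2; norm_num at ha2
  have hinv : (a j)⁻¹ * (a j)⁻¹ = ((a j) ^ 2)⁻¹ := by
    rw [sq, mul_inv]
  have h1 : (a j)⁻¹ * (a j)⁻¹ < 1 := by
    rw [hinv]
    exact inv_lt_one_of_one_lt₀ ha2
  have hzero : J j j * (1 - (a j)⁻¹ * (a j)⁻¹) = 0 := by
    linear_combination hentry
  have hjj : J j j = 0 := by
    rcases mul_eq_zero.mp hzero with h | h
    · exact h
    · linarith
  refine ⟨hjj, fun hpd => ?_⟩
  have hx : (Pi.single j 1 : Fin k → ℝ) ≠ 0 := by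
    intro h
    have := congrFun h j
    simp at this
  have := hpd.dotProduct_mulVec_pos hx
  simp [dotProduct, Matrix.mulVec, Pi.single_apply] at this
  rw [hjj] at this
  exact lt_irrefl 0 this
end
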